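/- arXiv:2002.01670 — 4 statements merged into one kernel-verified Lean document; each statement's English description precedes it below -/
import Mathlib

section
/- In a quasi-median graph, two distinct cliques dual to the same hyperplane are disjoint. -/
namespace QM

variable {V : Type*}

/-- Triangle condition. -/
def TriangleCondition (X : SimpleGraph V) : Prop :=
  ∀ a x y : V, X.Adj x y → X.dist a x = X.dist a y →
    ∃ z : V, X.Adj x z ∧ X.Adj y z ∧ X.dist a z + 1 = X.dist a x

/-- Quadrangle condition. -/
def QuadrangleCondition (X : SimpleGraph V) : Prop :=
  ∀ a x y z : V, X.Adj x z → X.Adj y z → x ≠ y →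
    X.dist a x = X.dist a y → X.dist a x + 1 = X.dist a z →
    ∃ w : V, X.Adj x w ∧ X.Adj y w ∧ X.dist a w + 2 = X.dist a z

/-- No induced copy of K₄ minus an edge. -/
def NoK4Minus (X : SimpleGraph V) : Prop :=
  ¬ ∃ a b c d : V, X.Adj a b ∧ X.Adj a c ∧ X.Adj a d ∧ X.Adj b c ∧ X.Adj b d ∧
      ¬ X.Adj c d ∧ c ≠ d

/-- No induced copy of K₃,₂. -/
def NoK32 (X : SimpleGraph V) : Prop :=
  ¬ ∃ a b c d e : V, a ≠ b ∧ b ≠ c ∧ a ≠ c ∧ d ≠ e ∧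
      ¬ X.Adj a b ∧ ¬ X.Adj b c ∧ ¬ X.Adj a c ∧ ¬ X.Adj d e ∧
      X.Adj a d ∧ X.Adj a e ∧ X.Adj b d ∧ X.Adj b e ∧ X.Adj c d ∧ X.Adj c e

/-- Quasi-median graph. -/
def QuasiMedian (X : SimpleGraph V) : Prop :=
  X.Connected ∧ NoK4Minus X ∧ NoK32 X ∧ TriangleCondition X ∧ QuadrangleCondition X

/-- Two edges lie in a common triangle or are opposite sides of a square. -/
def EdgeRel (X : SimpleGraph V) (e f : Sym2 V) : Prop :=
  (∃ a b c : V, X.Adj a b ∧ X.Adj b c ∧ X.Adj a c ∧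
      e ∈ ({s(a, b), s(b, c), s(a, c)} : Set (Sym2 V)) ∧
      f ∈ ({s(a, b), s(b, c), s(a, c)} : Set (Sym2 V))) ∨
  (∃ a b c d : V, X.Adj a b ∧ X.Adj b c ∧ X.Adj c d ∧ X.Adj d a ∧ a ≠ c ∧ b ≠ d ∧
      ((e = s(a, b) ∧ f = s(d, c)) ∨ (f = s(a, b) ∧ e = s(d, c))))

/-- Two edges are dual to the same hyperplane. -/
def SameHyp (X : SimpleGraph V) (e f : Sym2 V) : Prop :=
  Relation.EqvGen (EdgeRel X) e f

/-- Two edges sharing an endpoint span a square. -/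
def SpanSquare (X : SimpleGraph V) (e f : Sym2 V) : Prop :=
  ∃ a b c d : V, X.Adj a b ∧ X.Adj a c ∧ X.Adj b d ∧ X.Adj c d ∧ b ≠ c ∧ a ≠ d ∧
    e = s(a, b) ∧ f = s(a, c)

/-- The hyperplanes dual to `e` and `f` are transverse. -/
def Transverse (X : SimpleGraph V) (e f : Sym2 V) : Prop :=
  ∃ e' f' : Sym2 V, SameHyp X e e' ∧ SameHyp X f f' ∧ SpanSquare X e' f'

/-- `v` belongs to the carrier of the hyperplane dual to `e`. -/
def InCarrier (X : SimpleGraph V) (e : Sym2 V) (v : V) : Prop :=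
  ∃ f : Sym2 V, SameHyp X e f ∧ f ∈ X.edgeSet ∧ v ∈ f

/-- The hyperplanes dual to `e` and `f` are tangent. -/
def Tangent (X : SimpleGraph V) (e f : Sym2 V) : Prop :=
  ¬ SameHyp X e f ∧ ¬ Transverse X e f ∧ ∃ v : V, InCarrier X e v ∧ InCarrier X f v

/-- The graph obtained from `X` by removing (the interiors of) all edges dual to the
hyperplane of `e₀`; its connected components are the sectors delimited by this hyperplane. -/
def delGraph (X : SimpleGraph V) (e₀ : Sym2 V) : SimpleGraph V :=
  SimpleGraph.fromRel (fun a b => X.Adj a b ∧ ¬ SameHyp X s(a, b) e₀)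

end QM

open QM

namespace QMAux

open SimpleGraph QM

variable {V : Type*} {X : SimpleGraph V}

/-- Maximal cliques are gated: every vertex has a unique nearest point in the clique,
and every other clique vertex is one step further. -/
lemma gate_exists (hconn : X.Connected) (hK4 : NoK4Minus X) (hTC : TriangleCondition X)
    {C : Set V} (hC : X.IsClique C) (hCmax : ∀ E : Set V, X.IsClique E → C ⊆ E → E = C)
    (hne : C.Nonempty) (x : V) :
    ∃ m, m ∈ C ∧ ∀ w ∈ C, w ≠ m → X.dist x w = X.dist x m + 1 := by
  obtain ⟨v0, hv0⟩ := hne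
  have hS : {n | ∃ w ∈ C, X.dist x w = n}.Nonempty := ⟨X.dist x v0, v0, hv0, rfl⟩
  obtain ⟨m, hmC, hm⟩ := Nat.sInf_mem hS
  refine ⟨m, hmC, fun w hw hwm => ?_⟩
  have hlow : sInf {n | ∃ w ∈ C, X.dist x w = n} ≤ X.dist x w := Nat.sInf_le ⟨w, hw, rfl⟩
  have hadjmw : X.Adj m w := hC hmC hw (Ne.symm hwm)
  have hub : X.dist x w ≤ X.dist x m + 1 := by
    have h1 := hconn.dist_triangle (u := x) (v := m) (w := w)
    rwa [SimpleGraph.dist_eq_one_iff_adj.mpr hadjmw] at h1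
  rcases eq_or_lt_of_le (show X.dist x m ≤ X.dist x w by omega) with heq | hlt
  · exfalso
    obtain ⟨z, hmz, hwz, hz⟩ := hTC x m w hadjmw heq
    have hzall : ∀ t ∈ C, t ≠ z → X.Adj z t := by
      intro t ht htz
      by_cases htm : t = m
      · subst htm; exact hmz.symm
      by_cases htw : t = w
      · subst htw; exact hwz.symm
      by_contra hh
      exact hK4 ⟨m, w, t, z, hadjmw, hC hmC ht (fun e => htm e.symm), hmz,
        hC hw ht (fun e => htw e.symm), hwz, (fun e => hh e.symm), htz⟩
    have hclq : X.IsClique (insert z C) := by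
      intro u hu t ht hut
      rcases Set.mem_insert_iff.mp hu with hu' | hu'
      · rcases Set.mem_insert_iff.mp ht with ht' | ht'
        · exact absurd (hu'.trans ht'.symm) hut
        · rw [hu']; exact hzall t ht' (fun e => hut (hu'.trans e.symm))
      · rcases Set.mem_insert_iff.mp ht with ht' | ht'
        · rw [ht']; exact (hzall u hu' (fun e => hut (e.trans ht'.symm))).symm
        · exact hC hu' ht' hut
    have hzCeq := hCmax _ hclq (Set.subset_insert z C)
    have hzC : z ∈ C := hzCeq ▸ Set.mem_insert z C
    have hl2 := Nat.sInf_le (show X.dist x z ∈ {n | ∃ w ∈ C, X.dist x w = n} from ⟨z, hzC, rfl⟩)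
    omega
  · omega

section Gate

variable {C : Set V} {p : V → V}

/-- Endpoints of an edge with distinct gates are at the same distance from the clique. -/
lemma levelA (hconn : X.Connected) (hpC : ∀ x, p x ∈ C)
    (hp : ∀ x, ∀ w ∈ C, w ≠ p x → X.dist x w = X.dist x (p x) + 1)
    {x y : V} (hxy : X.Adj x y) (hne : p x ≠ p y) : X.dist x (p x) = X.dist y (p y) := by
  have h1 := hp y (p x) (hpC x) hne
  have h2 := hp x (p y) (hpC y) hne.symm
  have t1 : X.dist y (p x) ≤ X.dist y x + X.dist x (p x) := hconn.dist_triangle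
  have t2 : X.dist x (p y) ≤ X.dist x y + X.dist y (p y) := hconn.dist_triangle
  have e1 : X.dist y x = 1 := SimpleGraph.dist_eq_one_iff_adj.mpr hxy.symm
  have e2 : X.dist x y = 1 := SimpleGraph.dist_eq_one_iff_adj.mpr hxy
  omega

/-- In a triangle, if two gates agree then the third agrees too. -/
lemma triangleLem (hconn : X.Connected) (hK4 : NoK4Minus X) (hTC : TriangleCondition X)
    (hpC : ∀ x, p x ∈ C)
    (hp : ∀ x, ∀ w ∈ C, w ≠ p x → X.dist x w = X.dist x (p x) + 1)
    {a b c : V} (hab : X.Adj a b) (hbc : X.Adj b c) (hac : X.Adj a c)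
    (h : p a = p b) : p c = p a := by
  by_contra hne
  have e1 : X.dist c (p c) = X.dist a (p a) := levelA hconn hpC hp hac.symm hne
  have e2 : X.dist c (p c) = X.dist b (p b) :=
    levelA hconn hpC hp hbc.symm (fun hh => hne (hh.trans h.symm))
  have hcm : X.dist c (p a) = X.dist c (p c) + 1 := hp c (p a) (hpC a) (fun hh => hne hh.symm)
  have hane : X.dist a (p a) ≠ 0 := by
    intro h0
    have ha : a = p a := hconn.dist_eq_zero_iff.mp h0
    have hb : b = p b := hconn.dist_eq_zero_iff.mp (by omega)
    exact hab.ne (ha.trans (h.symm ▸ hb.symm))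
  have hdba : X.dist (p a) b = X.dist a (p a) := by
    have hb : X.dist b (p a) = X.dist b (p b) := by rw [h]
    rw [SimpleGraph.dist_comm]; omega
  have heq : X.dist (p a) a = X.dist (p a) b := by
    rw [hdba, SimpleGraph.dist_comm]
  obtain ⟨z, haz, hbz, hz⟩ := hTC (p a) a b hab heq
  have hapa : X.dist (p a) a = X.dist a (p a) := SimpleGraph.dist_comm
  have hcpa : X.dist (p a) c = X.dist a (p a) + 1 := by
    rw [SimpleGraph.dist_comm]; omega
  have hzc : z ≠ c := by intro hh; rw [hh] at hz; omega
  have hcz : X.Adj c z := by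
    by_contra hh
    exact hK4 ⟨a, b, c, z, hab, hac, haz, hbc, hbz, hh, (Ne.symm hzc)⟩
  have htri : X.dist c (p a) ≤ X.dist c z + X.dist z (p a) := hconn.dist_triangle
  have hcz1 : X.dist c z = 1 := SimpleGraph.dist_eq_one_iff_adj.mpr hcz
  have hzpa : X.dist z (p a) = X.dist (p a) z := SimpleGraph.dist_comm
  omega

/-- Key square lemma (the hard case of invariance): an induced square whose
three consecutive corners have the same gate while the fourth differs is impossible. -/
lemma sq2 (hconn : X.Connected) (hK4 : NoK4Minus X) (hK32 : NoK32 X)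
    (hQC : QuadrangleCondition X) (hpC : ∀ x, p x ∈ C)
    (hp : ∀ x, ∀ w ∈ C, w ≠ p x → X.dist x w = X.dist x (p x) + 1)
    {a b c d : V} (hab : X.Adj a b) (hbc : X.Adj b c) (hcd : X.Adj c d) (hda : X.Adj d a)
    (hnac : ¬ X.Adj a c) (hnbd : ¬ X.Adj b d) (hac : a ≠ c) (hbd : b ≠ d)
    (h1 : p a = p b) (h2 : p b = p c) (h3 : p c ≠ p d) : False := by
  have hpac : p a = p c := h1.trans h2
  have hpad : p a ≠ p d := fun hh => h3 (hpac.symm.trans hh)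
  have e1 : X.dist a (p a) = X.dist d (p d) := levelA hconn hpC hp hda.symm hpad
  have e2 : X.dist c (p c) = X.dist d (p d) := levelA hconn hpC hp hcd h3
  have hdm : X.dist d (p a) = X.dist d (p d) + 1 := hp d (p a) (hpC a) hpad
  have f1 : X.dist (p a) a = X.dist d (p d) := by rw [SimpleGraph.dist_comm]; exact e1
  have f2 : X.dist (p a) c = X.dist d (p d) := by rw [hpac, SimpleGraph.dist_comm]; exact e2
  have f3 : X.dist (p a) d = X.dist d (p d) + 1 := by rw [SimpleGraph.dist_comm]; exact hdm
  obtain ⟨w1, haw1, hcw1, hw1⟩ :=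
    hQC (p a) a c d hda.symm hcd hac (f1.trans f2.symm) (by rw [f1, f3])
  have hw1b : w1 = b := by
    by_contra hne
    have hnwb : ¬ X.Adj w1 b := fun h =>
      hK4 ⟨w1, b, a, c, h, haw1.symm, hcw1.symm, hab.symm, hbc, hnac, hac⟩
    have hw1d : w1 ≠ d := by intro hh; rw [hh] at hw1; omega
    have hnwd : ¬ X.Adj w1 d := fun h =>
      hK4 ⟨w1, d, a, c, h, haw1.symm, hcw1.symm, hda, hcd.symm, hnac, hac⟩
    exact hK32 ⟨b, d, w1, a, c, hbd, Ne.symm hw1d, Ne.symm hne, hac, hnbd,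
      (fun h => hnwd h.symm), (fun h => hnwb h.symm), hnac,
      hab.symm, hbc, hda, hcd.symm, haw1.symm, hcw1.symm⟩
  rw [hw1b] at hw1
  have g_b : X.dist (p d) b = X.dist d (p d) := by
    have hb1 : X.dist b (p d) = X.dist b (p b) + 1 :=
      hp b (p d) (hpC d) (fun hh => h3 (hh.trans h2).symm)
    have hb2 : X.dist b (p b) = X.dist (p a) b := by rw [← h1, SimpleGraph.dist_comm]
    rw [SimpleGraph.dist_comm]; omega
  have g_d : X.dist (p d) d = X.dist d (p d) := SimpleGraph.dist_comm
  have g_a : X.dist (p d) a = X.dist d (p d) + 1 := by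
    have ha1 := hp a (p d) (hpC d) (fun hh => hpad hh.symm)
    rw [SimpleGraph.dist_comm]; omega
  obtain ⟨w, hbw, hdw, hw⟩ :=
    hQC (p d) b d a hab.symm hda hbd (g_b.trans g_d.symm) (by rw [g_b, g_a])
  have hwa : w ≠ a := by intro hh; rw [hh] at hw; omega
  have g_c : X.dist (p d) c = X.dist d (p d) + 1 := by
    have hc1 := hp c (p d) (hpC d) (fun hh => h3 hh.symm)
    rw [SimpleGraph.dist_comm]; omega
  have hwc : w ≠ c := by intro hh; rw [hh] at hw; omega
  have hnwa : ¬ X.Adj w a := fun h =>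
    hK4 ⟨w, a, b, d, h, hbw.symm, hdw.symm, hab, hda.symm, hnbd, hbd⟩
  have hnwc : ¬ X.Adj w c := fun h =>
    hK4 ⟨w, c, b, d, h, hbw.symm, hdw.symm, hbc.symm, hcd, hnbd, hbd⟩
  exact hK32 ⟨a, c, w, b, d, hac, Ne.symm hwc, Ne.symm hwa, hbd, hnac,
    (fun h => hnwc h.symm), (fun h => hnwa h.symm), hnbd,
    hab, hda.symm, hbc.symm, hcd, hbw.symm, hdw.symm⟩

/-- Square invariance: in a square, if the gates of one side agree, so do those of
the opposite side. -/
lemma sq (hconn : X.Connected) (hK4 : NoK4Minus X) (hK32 : NoK32 X)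
    (hTC : TriangleCondition X) (hQC : QuadrangleCondition X) (hpC : ∀ x, p x ∈ C)
    (hp : ∀ x, ∀ w ∈ C, w ≠ p x → X.dist x w = X.dist x (p x) + 1)
    {a b c d : V} (hab : X.Adj a b) (hbc : X.Adj b c) (hcd : X.Adj c d) (hda : X.Adj d a)
    (hac : a ≠ c) (hbd : b ≠ d) (h : p a = p b) : p c = p d := by
  by_cases hAC : X.Adj a c
  · have t1 : p c = p a := triangleLem hconn hK4 hTC hpC hp hab hbc hAC h
    have t2 : p d = p a := triangleLem hconn hK4 hTC hpC hp hAC hcd hda.symm t1.symm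
    exact t1.trans t2.symm
  by_cases hBD : X.Adj b d
  · have t1 : p d = p b := triangleLem hconn hK4 hTC hpC hp hab.symm hda.symm hBD h.symm
    have t2 : p c = p b := triangleLem hconn hK4 hTC hpC hp hBD hcd.symm hbc t1.symm
    exact t2.trans t1.symm
  by_cases hcm : p c = p a
  · by_cases hdm : p d = p a
    · exact hcm.trans hdm.symm
    · exact absurd (sq2 hconn hK4 hK32 hQC hpC hp hab hbc hcd hda hAC hBD hac hbd h
        (h.symm.trans hcm.symm) (fun hh => hdm (hh.symm.trans hcm))) id
  · by_cases hdm : p d = p a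
    · exact absurd (sq2 hconn hK4 hK32 hQC hpC hp hab.symm hda.symm hcd.symm hbc.symm hBD hAC
        hbd hac h.symm hdm.symm (fun hh => hcm (hh.symm.trans hdm))) id
    · by_cases hcd2 : p c = p d
      · exact hcd2
      · exfalso
        have hpac : p a ≠ p c := fun hh => hcm hh.symm
        have hpad : p a ≠ p d := fun hh => hdm hh.symm
        have e1 : X.dist a (p a) = X.dist d (p d) := levelA hconn hpC hp hda.symm hpad
        have e2 : X.dist c (p c) = X.dist d (p d) := levelA hconn hpC hp hcd hcd2
        have cm : X.dist c (p a) = X.dist c (p c) + 1 := hp c (p a) (hpC a) hpac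
        have dm : X.dist d (p a) = X.dist d (p d) + 1 := hp d (p a) (hpC a) hpad
        have f_c : X.dist (p a) c = X.dist d (p d) + 1 := by
          rw [SimpleGraph.dist_comm]; omega
        have f_d : X.dist (p a) d = X.dist d (p d) + 1 := by
          rw [SimpleGraph.dist_comm]; omega
        obtain ⟨z, hcz, hdz, hz⟩ := hTC (p a) c d hcd (f_c.trans f_d.symm)
        have hzc : p z ≠ p c := by
          intro hh
          have ht := triangleLem hconn hK4 hTC hpC hp hcz.symm hcd hdz.symm hh
          exact hcd2 (hh.symm.trans ht.symm)
        have hzd : p z ≠ p d := by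
          intro hh
          have ht := triangleLem hconn hK4 hTC hpC hp hdz.symm hcd.symm hcz.symm hh
          exact hcd2 (ht.trans hh)
        have hzm : p z = p a := by
          by_contra hne
          have l1 : X.dist z (p a) = X.dist z (p z) + 1 :=
            hp z (p a) (hpC a) (fun hh => hne hh.symm)
          have l2 : X.dist z (p z) = X.dist c (p c) := levelA hconn hpC hp hcz.symm hzc
          have l3 : X.dist z (p a) = X.dist (p a) z := SimpleGraph.dist_comm
          omega
        have haz : a ≠ z := fun hh => hAC (by rw [hh]; exact hcz.symm)
        have hnaz : ¬ X.Adj a z := by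
          intro hh
          have ht := triangleLem hconn hK4 hTC hpC hp hh hdz.symm hda.symm hzm.symm
          exact hdm ht
        have f_a : X.dist (p a) a = X.dist d (p d) := by rw [SimpleGraph.dist_comm]; exact e1
        have f_z : X.dist (p a) z = X.dist d (p d) := by omega
        obtain ⟨w, haw, hzw, hw⟩ :=
          hQC (p a) a z d hda.symm hdz.symm haz (f_a.trans f_z.symm) (by rw [f_a, f_d])
        have hwm : p w = p a := by
          by_contra hne
          have l1 : X.dist w (p a) = X.dist w (p w) + 1 :=
            hp w (p a) (hpC a) (fun hh => hne hh.symm)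
          have l2 : X.dist a (p w) = X.dist a (p a) + 1 := hp a (p w) (hpC w) hne
          have l3 : X.dist a (p w) ≤ X.dist a w + X.dist w (p w) := hconn.dist_triangle
          have l4 : X.dist a w = 1 := SimpleGraph.dist_eq_one_iff_adj.mpr haw
          have l5 : X.dist w (p a) = X.dist (p a) w := SimpleGraph.dist_comm
          omega
        have hwd : w ≠ d := by intro hh; rw [hh] at hw; omega
        have hnwd : ¬ X.Adj w d := fun hh =>
          hK4 ⟨w, d, a, z, hh, haw.symm, hzw.symm, hda, hdz, hnaz, haz⟩
        exact sq2 hconn hK4 hK32 hQC hpC hp haw hzw.symm hdz.symm hda hnaz hnwd haz hwd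
          hwm.symm (hwm.trans hzm.symm) (by rw [hzm]; exact hpad)

/-- In a triangle the three gates are either all equal or pairwise distinct. -/
lemma triAll (hconn : X.Connected) (hK4 : NoK4Minus X) (hTC : TriangleCondition X)
    (hpC : ∀ x, p x ∈ C)
    (hp : ∀ x, ∀ w ∈ C, w ≠ p x → X.dist x w = X.dist x (p x) + 1)
    {a b c : V} (hab : X.Adj a b) (hbc : X.Adj b c) (hac : X.Adj a c) :
    (p a = p b ∧ p b = p c ∧ p a = p c) ∨ (p a ≠ p b ∧ p b ≠ p c ∧ p a ≠ p c) := by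
  by_cases h1 : p a = p b
  · left
    have hca := triangleLem hconn hK4 hTC hpC hp hab hbc hac h1
    exact ⟨h1, h1.symm.trans hca.symm, hca.symm⟩
  · right
    refine ⟨h1, fun h => h1 ?_, fun h => h1 ?_⟩
    · exact triangleLem hconn hK4 hTC hpC hp hbc hac.symm hab.symm h
    · exact (triangleLem hconn hK4 hTC hpC hp hac hbc.symm hab h).symm

end Gate

end QMAux

/-- In a quasi-median graph, two distinct cliques dual to the same hyperplane are disjoint. -/
theorem distinct_cliques_dual_to_same_hyperplane_disjoint
    {V : Type*} (X : SimpleGraph V) (hqm : QuasiMedian X)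
    (e₀ : Sym2 V) (he₀ : e₀ ∈ X.edgeSet)
    (C D : Set V)
    (hC : X.IsClique C) (hCmax : ∀ E : Set V, X.IsClique E → C ⊆ E → E = C)
    (hD : X.IsClique D) (hDmax : ∀ E : Set V, X.IsClique E → D ⊆ E → E = D)
    (hCedge : ∃ a ∈ C, ∃ b ∈ C, a ≠ b)
    (hDedge : ∃ a ∈ D, ∃ b ∈ D, a ≠ b)
    (hCdual : ∀ a ∈ C, ∀ b ∈ C, a ≠ b → SameHyp X s(a, b) e₀)
    (hDdual : ∀ a ∈ D, ∀ b ∈ D, a ≠ b → SameHyp X s(a, b) e₀)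
    (hne : C ≠ D) :
    Disjoint C D := by
  obtain ⟨hconn, hK4, hK32, hTC, hQC⟩ := hqm
  by_contra hdis
  obtain ⟨v, hvC, hvD⟩ := Set.not_disjoint_iff.mp hdis
  -- find non-adjacent c ∈ C, d ∈ D
  have hcd : ∃ c ∈ C, ∃ d ∈ D, c ≠ d ∧ ¬ X.Adj c d := by
    by_contra hno
    push_neg at hno
    have hclique : X.IsClique (C ∪ D) := by
      intro x hx y hy hxy
      rcases hx with hx | hx <;> rcases hy with hy | hy
      · exact hC hx hy hxy
      · exact hno x hx y hy hxy
      · exact (hno y hy x hx hxy.symm).symm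
      · exact hD hx hy hxy
    have h1 := hCmax _ hclique Set.subset_union_left
    have h2 := hDmax _ hclique Set.subset_union_right
    exact hne (h1.symm.trans h2)
  obtain ⟨c, hcC, d, hdD, hcd_ne, hcd_nadj⟩ := hcd
  have hdC : d ∉ C := fun h => hcd_nadj (hC hcC h hcd_ne)
  have hcD : c ∉ D := fun h => hcd_nadj (hD h hdD hcd_ne)
  have hvc : v ≠ c := fun h => hcD (h ▸ hvD)
  have hvd : v ≠ d := fun h => hdC (h ▸ hvC)
  have hadj_vc : X.Adj v c := hC hvC hcC hvc
  have hadj_vd : X.Adj v d := hD hvD hdD hvd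
  -- gates with respect to the maximal clique C
  have hCne : C.Nonempty := ⟨v, hvC⟩
  choose p hpC hp using QMAux.gate_exists hconn hK4 hTC hC hCmax hCne
  have pv : p v = v := by
    by_contra hh
    have h1 := hp v v hvC (fun e => hh e.symm)
    rw [SimpleGraph.dist_self] at h1
    omega
  have pc : p c = c := by
    by_contra hh
    have h1 := hp c c hcC (fun e => hh e.symm)
    rw [SimpleGraph.dist_self] at h1
    omega
  have pd : p d = v := by
    by_contra hh
    have h1 := hp d v hvC (fun e => hh e.symm)
    have h2 : X.dist d v = 1 := SimpleGraph.dist_eq_one_iff_adj.mpr hadj_vd.symm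
    have h3 : X.dist d (p d) ≠ 0 := by
      intro h0
      have h4 : d = p d := hconn.dist_eq_zero_iff.mp h0
      exact hdC (h4 ▸ hpC d)
    omega
  -- edge predicate machinery
  have Pedge : ∀ x y : V, (∀ u w : V, s(x, y) = s(u, w) → p u = p w) ↔ p x = p y := by
    intro x y
    constructor
    · intro h; exact h x y rfl
    · intro h u w huw
      rcases Sym2.eq_iff.mp huw with ⟨rfl, rfl⟩ | ⟨rfl, rfl⟩
      · exact h
      · exact h.symm
  have key : ∀ e f : Sym2 V, SameHyp X e f →
      ((∀ x y : V, e = s(x, y) → p x = p y) ↔ (∀ x y : V, f = s(x, y) → p x = p y)) := by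
    intro e f hef
    have hef' : Relation.EqvGen (EdgeRel X) e f := hef
    clear hef
    induction hef' with
    | rel e f hrel =>
      rcases hrel with ⟨a, b, c, hab, hbc, hac, he, hf⟩ |
        ⟨a, b, c, d, hab, hbc, hcd, hda, hacne, hbdne, hef2⟩
      · simp only [Set.mem_insert_iff, Set.mem_singleton_iff] at he hf
        rcases QMAux.triAll hconn hK4 hTC hpC hp hab hbc hac with ⟨q1, q2, q3⟩ | ⟨q1, q2, q3⟩
        · refine iff_of_true ?_ ?_
          · rcases he with rfl | rfl | rfl
            · exact (Pedge a b).mpr q1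
            · exact (Pedge b c).mpr q2
            · exact (Pedge a c).mpr q3
          · rcases hf with rfl | rfl | rfl
            · exact (Pedge a b).mpr q1
            · exact (Pedge b c).mpr q2
            · exact (Pedge a c).mpr q3
        · refine iff_of_false ?_ ?_
          · rcases he with rfl | rfl | rfl
            · exact fun hP => q1 (hP a b rfl)
            · exact fun hP => q2 (hP b c rfl)
            · exact fun hP => q3 (hP a c rfl)
          · rcases hf with rfl | rfl | rfl
            · exact fun hP => q1 (hP a b rfl)
            · exact fun hP => q2 (hP b c rfl)
            · exact fun hP => q3 (hP a c rfl)
      · have main : p a = p b ↔ p d = p c := by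
          constructor
          · intro h
            exact (QMAux.sq hconn hK4 hK32 hTC hQC hpC hp hab hbc hcd hda hacne hbdne h).symm
          · intro h
            exact (QMAux.sq hconn hK4 hK32 hTC hQC hpC hp hcd.symm hbc.symm hab.symm hda.symm
              (Ne.symm hbdne) (Ne.symm hacne) h).symm
        rcases hef2 with ⟨rfl, rfl⟩ | ⟨rfl, rfl⟩
        · rw [Pedge a b, Pedge d c]; exact main
        · rw [Pedge d c, Pedge a b]; exact main.symm
    | refl e => exact Iff.rfl
    | symm e f _ ih => exact ih.symm
    | trans e f g _ _ ih1 ih2 => exact ih1.trans ih2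
  -- assemble the contradiction
  have h1 : SameHyp X s(v, c) e₀ := hCdual v hvC c hcC hvc
  have h2 : SameHyp X s(v, d) e₀ := hDdual v hvD d hdD hvd
  have hsh : SameHyp X s(v, c) s(v, d) :=
    Relation.EqvGen.trans _ _ _ h1 (Relation.EqvGen.symm _ _ h2)
  have hPvd : ∀ x y : V, s(v, d) = s(x, y) → p x = p y :=
    (Pedge v d).mpr (pv.trans pd.symm)
  have hPvc : ∀ x y : V, s(v, c) = s(x, y) → p x = p y := (key _ _ hsh).mpr hPvd
  have hfinal : p v = p c := hPvc v c rfl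
  exact hvc ((pv.symm.trans hfinal).trans pc)
end

section
/- Let G be a group acting hyperplane-specially on a quasi-median graph X (faithfully, and such that no hyperplane is transverse or tangent to any of its G-translates, and no translate of a hyperplane transverse to J is tangent to J). Fix a geodesic γ from x to y crossing hyperplanes J₁, …, Jₙ in order, and suppose Jᵢ and Jⱼ (i < j) lie in the same G-orbit while for each i < k < j some G-translate of J_k is transverse to Jⱼ. Then a contradiction follows; i.e., no such configuration exists along a geodesic. -/
open QM

/- ======================================================================== -/
/-  Auxiliary development                                                    -/
/- ======================================================================== -/

namespace QMProof

open SimpleGraph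

variable {V : Type*} {X : SimpleGraph V}

/-! ### basic SameHyp lemmas -/

lemma sh_refl (e : Sym2 V) : SameHyp X e e := Relation.EqvGen.refl e

lemma sh_symm {e f : Sym2 V} (h : SameHyp X e f) : SameHyp X f e := Relation.EqvGen.symm _ _ h

lemma sh_trans {e f g : Sym2 V} (h : SameHyp X e f) (h' : SameHyp X f g) : SameHyp X e g :=
  Relation.EqvGen.trans _ _ _ h h'

lemma sh_rel {e f : Sym2 V} (h : EdgeRel X e f) : SameHyp X e f := Relation.EqvGen.rel _ _ h

/-- the two edges `s(a,b)`, `s(a,c)` of a triangle are dual to the same hyperplane -/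
lemma sh_tri {a b c : V} (hab : X.Adj a b) (hac : X.Adj a c) (hbc : X.Adj b c) :
    SameHyp X s(a, b) s(a, c) := by
  refine sh_rel (Or.inl ⟨a, b, c, hab, hbc, hac, ?_, ?_⟩) <;> simp

/-- opposite edges of a (possibly degenerate) square are dual to the same hyperplane;
`a ~ b ~ c ~ d ~ a`, with `a ≠ c`, `b ≠ d`. The edges are `s(a,b)` and `s(d,c)`. -/
lemma sh_sq {a b c d : V} (hab : X.Adj a b) (hbc : X.Adj b c) (hcd : X.Adj c d)
    (hda : X.Adj d a) (hac : a ≠ c) (hbd : b ≠ d) : SameHyp X s(a, b) s(d, c) :=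
  sh_rel (Or.inr ⟨a, b, c, d, hab, hbc, hcd, hda, hac, hbd, Or.inl ⟨rfl, rfl⟩⟩)

lemma edgeRel_symm {e f : Sym2 V} (h : EdgeRel X e f) : EdgeRel X f e := by
  rcases h with ⟨a, b, c, h1, h2, h3, h4, h5⟩ | ⟨a, b, c, d, h1, h2, h3, h4, h5, h6, h7⟩
  · exact Or.inl ⟨a, b, c, h1, h2, h3, h5, h4⟩
  · exact Or.inr ⟨a, b, c, d, h1, h2, h3, h4, h5, h6, h7.symm⟩

/-! ### distance helpers -/

section dist

lemma deq0 (hconn : X.Connected) {a b : V} (h : X.dist a b = 0) : a = b :=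
  (SimpleGraph.Connected.dist_eq_zero_iff hconn).1 h

lemma dadj (hconn : X.Connected) {a b : V} (h : X.Adj a b) : X.dist a b = 1 :=
  dist_eq_one_iff_adj.2 h

lemma dtri (hconn : X.Connected) (a b c : V) : X.dist a c ≤ X.dist a b + X.dist b c :=
  SimpleGraph.Connected.dist_triangle hconn

lemma dstep (hconn : X.Connected) {b c : V} (h : X.Adj b c) (a : V) :
    X.dist a c ≤ X.dist a b + 1 := by
  have := dtri hconn a b c
  rwa [dadj hconn h] at this

lemma dne {a b : V} (h : X.Adj a b) : a ≠ b := h.ne'.symm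

/-- neighbours have distances to any vertex differing by at most one. -/
lemma dcomm (a b : V) : X.dist a b = X.dist b a := SimpleGraph.dist_comm

lemma dnbr (hconn : X.Connected) {x y : V} (h : X.Adj x y) (k : V) :
    X.dist x k ≤ X.dist y k + 1 := by
  rw [dcomm x k, dcomm y k]
  exact dstep hconn h.symm k

lemma dist_getVert_le (hconn : X.Connected) {u v : V} (w : X.Walk u v) :
    ∀ k l : ℕ, k ≤ l → l ≤ w.length → X.dist (w.getVert k) (w.getVert l) ≤ l - k := by
  intro k l hkl hl
  induction l with
  | zero =>
      have : k = 0 := by omega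
      subst this; simp [SimpleGraph.dist_self]
  | succ l ih =>
      rcases Nat.eq_or_lt_of_le hkl with rfl | hlt
      · simp [SimpleGraph.dist_self]
      · have hk_le : k ≤ l := by omega
        have hll : l ≤ w.length := by omega
        have hadj := w.adj_getVert_succ (show l < w.length by omega)
        have h1 := dstep hconn hadj (w.getVert k)
        have h2 := ih hk_le hll
        omega

lemma dist_getVert_eq (hconn : X.Connected) {u v : V} (w : X.Walk u v)
    (hgeo : w.length = X.dist u v) {k l : ℕ} (hkl : k ≤ l) (hl : l ≤ w.length) :
    X.dist (w.getVert k) (w.getVert l) = l - k := by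
  have h1 : X.dist u (w.getVert k) ≤ k := by
    have := dist_getVert_le hconn w 0 k (by omega) (by omega)
    simpa [w.getVert_zero] using this
  have h2 : X.dist (w.getVert l) v ≤ w.length - l := by
    have := dist_getVert_le hconn w l w.length hl le_rfl
    rwa [w.getVert_length] at this
  have h3 := dist_getVert_le hconn w k l hkl hl
  have h4 := dtri hconn u (w.getVert k) v
  have h5 := dtri hconn (w.getVert k) (w.getVert l) v
  omega

lemma walk_edge_eq {u v : V} (w : X.Walk u v) :
    ∀ k : ℕ, ∀ h : k < w.edges.length, w.edges[k] = s(w.getVert k, w.getVert (k + 1)) := by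
  induction w with
  | nil => intro k h; simp [SimpleGraph.Walk.edges_nil] at h
  | cons h' p ih =>
      intro k hk
      cases k with
      | zero =>
          simp [SimpleGraph.Walk.edges_cons, SimpleGraph.Walk.getVert_zero,
            SimpleGraph.Walk.getVert_cons_succ]
      | succ k =>
          have hk' : k < p.edges.length := by
            rw [SimpleGraph.Walk.edges_cons] at hk
            simp only [List.length_cons] at hk; omega
          simp only [SimpleGraph.Walk.edges_cons, List.getElem_cons_succ,
            SimpleGraph.Walk.getVert_cons_succ]
          exact ih k hk'

/-- there is a neighbour of `x` one step closer to `p`. -/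
lemma exists_adj_dist (hconn : X.Connected) {p x : V} {n : ℕ} (h : X.dist p x = n + 1) :
    ∃ r : V, X.Adj r x ∧ X.dist p r = n := by
  have hne : X.dist p x ≠ 0 := by omega
  obtain ⟨w, hw⟩ := SimpleGraph.exists_walk_of_dist_ne_zero hne
  have hlen : w.length = n + 1 := by rw [hw, h]
  refine ⟨w.getVert n, ?_, ?_⟩
  · have hadj := w.adj_getVert_succ (show n < w.length by omega)
    rwa [show n + 1 = w.length by omega, w.getVert_length] at hadj
  · have hle : X.dist p (w.getVert n) ≤ n := by
      have := dist_getVert_le hconn w 0 n (by omega) (by omega)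
      simpa [w.getVert_zero] using this
    have hadj := w.adj_getVert_succ (show n < w.length by omega)
    rw [show n + 1 = w.length by omega, w.getVert_length] at hadj
    have := dstep hconn hadj p
    omega

end dist

/-! ### cliques and gates -/

/-- maximal cliques, as sets of vertices -/
def MClique (X : SimpleGraph V) (K : Set V) : Prop :=
  (∀ a ∈ K, ∀ b ∈ K, a ≠ b → X.Adj a b) ∧
    ∀ K' : Set V, (∀ a ∈ K', ∀ b ∈ K', a ≠ b → X.Adj a b) → K ⊆ K' → K' ⊆ K

lemma exists_mclique {u v : V} (h : X.Adj u v) :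
    ∃ K : Set V, MClique X K ∧ u ∈ K ∧ v ∈ K := by
  classical
  set S : Set (Set V) := {K | ∀ a ∈ K, ∀ b ∈ K, a ≠ b → X.Adj a b} with hS
  have hx : ({u, v} : Set V) ∈ S := by
    intro a ha b hb hne
    rcases ha with rfl | ha
    · rcases hb with rfl | hb
      · exact absurd rfl hne
      · rcases hb with rfl; exact h
    · rcases ha with rfl
      rcases hb with rfl | hb
      · exact h.symm
      · rcases hb with rfl; exact absurd rfl hne
  have Hc : ∀ c ⊆ S, IsChain (· ⊆ ·) c → c.Nonempty → ∃ ub ∈ S, ∀ s ∈ c, s ⊆ ub := by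
    intro c hcS hchain hcne
    refine ⟨⋃₀ c, ?_, fun s hs => Set.subset_sUnion_of_mem hs⟩
    rintro a ⟨sa, hsa, ha⟩ b ⟨sb, hsb, hb⟩ hne
    rcases eq_or_ne sa sb with rfl | hss
    · exact hcS hsa a ha b hb hne
    · rcases hchain hsa hsb hss with hsub' | hsub'
      · exact hcS hsb a (hsub' ha) b hb hne
      · exact hcS hsa a ha b (hsub' hb) hne
  obtain ⟨M, hsub, hmax⟩ := zorn_subset_nonempty S Hc _ hx
  exact ⟨M, ⟨hmax.prop, fun K' hK' hMK' => hmax.2 hK' hMK'⟩, hsub (by simp), hsub (by simp)⟩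

/-- `γ` is the gate of `z` in the clique `K`. -/
def gateSpec (X : SimpleGraph V) (K : Set V) (z γ : V) : Prop :=
  γ ∈ K ∧ ∀ k ∈ K, k ≠ γ → X.dist z k = X.dist z γ + 1

lemma gate_unique {K : Set V} {z γ₁ γ₂ : V} (h1 : gateSpec X K z γ₁) (h2 : gateSpec X K z γ₂) :
    γ₁ = γ₂ := by
  by_contra hne
  have e1 := h2.2 γ₁ h1.1 hne
  have e2 := h1.2 γ₂ h2.1 (Ne.symm hne)
  omega

lemma gate_self {K : Set V} (hqm : QuasiMedian X) (hK : MClique X K) {k : V} (hk : k ∈ K) :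
    gateSpec X K k k := by
  refine ⟨hk, fun k' hk' hne => ?_⟩
  rw [SimpleGraph.dist_self, dadj hqm.1 (hK.1 k hk k' hk' (Ne.symm hne))]

lemma exists_gate (hqm : QuasiMedian X) {K : Set V} (hK : MClique X K) (hne : K.Nonempty)
    (z : V) : ∃ γ : V, gateSpec X K z γ := by
  classical
  set D : Set ℕ := {n | ∃ k ∈ K, X.dist z k = n} with hD
  have hDne : D.Nonempty := ⟨X.dist z hne.choose, hne.choose, hne.choose_spec, rfl⟩
  obtain ⟨γ, hγK, hγd⟩ := Nat.sInf_mem hDne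
  refine ⟨γ, hγK, fun k hk hnek => ?_⟩
  have hge : sInf D ≤ X.dist z k := Nat.sInf_le ⟨k, hk, rfl⟩
  have hadjγk : X.Adj γ k := hK.1 γ hγK k hk (Ne.symm hnek)
  have hle : X.dist z k ≤ X.dist z γ + 1 := dstep hqm.1 hadjγk z
  have hneq : X.dist z k ≠ X.dist z γ := by
    intro heq
    rcases Nat.eq_zero_or_pos (sInf D) with h0 | hpos
    · have hz1 : z = γ := deq0 hqm.1 (by omega)
      have hz2 : z = k := deq0 hqm.1 (by omega)
      exact hnek (hz2 ▸ hz1 ▸ rfl)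
    · obtain ⟨t, htγ, htk, htd⟩ := hqm.2.2.2.1 z γ k hadjγk (by omega)
      have htnotK : t ∉ K := by
        intro htK
        have := Nat.sInf_le (show X.dist z t ∈ D from ⟨t, htK, rfl⟩)
        omega
      have hadjall : ∀ k' ∈ K, X.Adj t k' := by
        intro k' hk'
        by_cases h1 : k' = γ
        · exact h1 ▸ htγ.symm
        · by_cases h2 : k' = k
          · exact h2 ▸ htk.symm
          · by_contra hnadj
            have hne_tk' : t ≠ k' := fun hh => htnotK (hh ▸ hk')
            exact hqm.2.1 ⟨γ, k, t, k', hadjγk, htγ, hK.1 γ hγK k' hk' (Ne.symm h1), htk,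
              hK.1 k hk k' hk' (Ne.symm h2), fun hh => hnadj hh, hne_tk'⟩
      have hclique : ∀ a ∈ insert t K, ∀ b ∈ insert t K, a ≠ b → X.Adj a b := by
        rintro a (rfl | ha) b (rfl | hb) hne'
        · exact absurd rfl hne'
        · exact hadjall b hb
        · exact (hadjall a ha).symm
        · exact hK.1 a ha b hb hne'
      have := hK.2 (insert t K) hclique (Set.subset_insert _ _) (Set.mem_insert t K)
      exact htnotK this
  omega

/-! ### Lemma C : the Djoković-style crossing lemma -/

/-- If `p~q` and `x~x'` are edges with the "full crossing" distance pattern, then they are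
dual to the same hyperplane. -/
lemma cross_full (hqm : QuasiMedian X) :
    ∀ k : ℕ, ∀ p q x x' : V, X.Adj p q → X.Adj x x' →
      X.dist p x = k → X.dist q x = k + 1 → X.dist p x' = k + 1 → X.dist q x' = k →
      SameHyp X s(p, q) s(x, x') := by
  intro k
  induction k using Nat.strong_induction_on with
  | _ k ih =>
    intro p q x x' hpq hxx' h1 h2 h3 h4
    rcases Nat.eq_zero_or_pos k with rfl | hk
    · have e1 : p = x := deq0 hqm.1 h1
      have e2 : q = x' := deq0 hqm.1 h4
      subst e1; subst e2
      exact sh_refl _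
    · obtain ⟨k, rfl⟩ : ∃ m, k = m + 1 := ⟨k - 1, by omega⟩
      obtain ⟨r, hrx, hpr⟩ := exists_adj_dist hqm.1 h1
      have hqr : X.dist q r = k + 1 := by
        have l1 : X.dist q r ≤ k + 1 := by
          have := dtri hqm.1 q p r
          rw [dadj hqm.1 hpq.symm] at this
          omega
        have l2 : X.dist q x ≤ X.dist q r + 1 := dstep hqm.1 hrx q
        omega
      have hx'r : x' ≠ r := by
        intro hh; rw [hh] at h3; omega
      obtain ⟨w, hx'w, hrw, hwd⟩ := hqm.2.2.2.2 q x' r x hxx'.symm hrx hx'r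
        (by omega) (by omega)
      have hqw : X.dist q w = k := by omega
      have hpw : X.dist p w = k + 1 := by
        have l1 : X.dist p x' ≤ X.dist p w + 1 := dstep hqm.1 hx'w.symm p
        have l2 : X.dist p w ≤ X.dist p r + 1 := dstep hqm.1 hrw p
        omega
      have hsh1 : SameHyp X s(p, q) s(r, w) :=
        ih k (by omega) p q r w hpq (hrw.symm.symm) hpr hqr hpw hqw
      have hxw : x ≠ w := by
        intro hh; rw [hh] at h2; omega
      have hsh2 : SameHyp X s(x, x') s(r, w) :=
        sh_sq hxx' hx'w hrw.symm hrx hxw hx'r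
      exact sh_trans hsh1 (sh_symm hsh2)

/-! ### Lemma U : flatness of true squares -/

/-- a true (induced) square `x ~ y ~ y' ~ x' ~ x` with non-adjacent distinct diagonals. -/
def TSq (X : SimpleGraph V) (x y y' x' : V) : Prop :=
  X.Adj x y ∧ X.Adj y y' ∧ X.Adj y' x' ∧ X.Adj x' x ∧
    ¬X.Adj x y' ∧ ¬X.Adj y x' ∧ x ≠ y' ∧ y ≠ x'

lemma TSq.rot {x y y' x' : V} (h : TSq X x y y' x') : TSq X y y' x' x := by
  obtain ⟨h1, h2, h3, h4, h5, h6, h7, h8⟩ := h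
  exact ⟨h2, h3, h4, h1, h6, fun hh => h5 hh.symm, h8, Ne.symm h7⟩

lemma TSq.refl {x y y' x' : V} (h : TSq X x y y' x') : TSq X y x x' y' := by
  obtain ⟨h1, h2, h3, h4, h5, h6, h7, h8⟩ := h
  exact ⟨h1.symm, h4.symm, h3.symm, h2.symm, h6, h5, h8, h7⟩

lemma adjd {a b : V} (h : X.dist a b = 1) : X.Adj a b := SimpleGraph.dist_eq_one_iff_adj.1 h

lemma ned {a b : V} {n : ℕ} (h : X.dist a b = n + 1) : a ≠ b := by
  intro heq; subst heq; rw [SimpleGraph.dist_self] at h; omega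

lemma nadjd2 {a b : V} (h : X.dist a b = 2) : ¬ X.Adj a b := by
  intro hadj
  rw [SimpleGraph.dist_eq_one_iff_adj.2 hadj] at h; omega

/-- distance two via a middle vertex, given non-adjacency -/
lemma dtwo (hconn : X.Connected) {a b c : V} (hne : a ≠ c) (hnadj : ¬ X.Adj a c)
    (h1 : X.Adj a b) (h2 : X.Adj b c) : X.dist a c = 2 := by
  have hle : X.dist a c ≤ 2 := by
    have := dtri hconn a b c
    rw [dadj hconn h1, dadj hconn h2] at this; omega
  have h0 : X.dist a c ≠ 0 := by
    intro hh; exact hne (deq0 hconn hh)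
  have h1' : X.dist a c ≠ 1 := by
    intro hh; exact hnadj (adjd hh)
  omega

section sqUproof

private lemma refV2 (hqm : QuasiMedian X) {N : ℕ}
    (IH : ∀ (w a b b' a' : V),
      X.dist w a + X.dist w b + X.dist w b' + X.dist w a' ≤ N → TSq X a b b' a' →
      X.dist w a' + X.dist w b = X.dist w a + X.dist w b')
    {v x y y' x' : V} (hsq : TSq X x y y' x')
    (hsum : X.dist v x + X.dist v y + X.dist v y' + X.dist v x' ≤ N + 1)
    (h1 : X.dist v y = X.dist v x) (h2 : X.dist v x' = X.dist v x)
    (h3 : X.dist v y' = X.dist v x + 1) : False := by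
  obtain ⟨axy, ayy', ay'x', ax'x, nxy', nyx', xney', ynex'⟩ := hsq
  set m := X.dist v x with hm
  rcases Nat.lt_or_ge m 2 with hlt | hge
  · rcases Nat.lt_or_ge m 1 with hlt0 | hge1
    · -- m = 0 : v = x = y, contradiction
      have hvx : v = x := deq0 hqm.1 (by omega)
      have hvy : v = y := deq0 hqm.1 (by omega)
      exact (dne axy) (hvx ▸ hvy ▸ rfl)
    · -- m = 1
      have hm1 : m = 1 := by omega
      have avx : X.Adj v x := adjd (by omega)
      have avy : X.Adj v y := adjd (by omega)
      have avx' : X.Adj v x' := adjd (by omega)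
      exact hqm.2.1 ⟨x, v, y, x', avx.symm, axy, ax'x.symm, avy, avx', nyx', ynex'⟩
  · -- m ≥ 2
    obtain ⟨w, hyw, hx'w, hwd⟩ := hqm.2.2.2.2 v y x' y' ayy' ay'x'.symm ynex'
      (by omega) (by omega)
    have hvw : X.dist v w = m - 1 := by omega
    have dwy : X.dist w y = 1 := dadj hqm.1 hyw.symm
    have dwx' : X.dist w x' = 1 := dadj hqm.1 hx'w.symm
    have dwy' : 2 ≤ X.dist w y' := by
      have := dtri hqm.1 v w y'
      omega
    have dwx : X.dist w x ≤ 2 := by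
      have := dstep hqm.1 axy.symm w
      omega
    have dwy'le : X.dist w y' ≤ 2 := by
      have := dstep hqm.1 ayy' w
      omega
    have heq := IH w x y y' x' (by omega)
      ⟨axy, ayy', ay'x', ax'x, nxy', nyx', xney', ynex'⟩
    -- heq : d w x' + d w y = d w x + d w y'
    have hwx0 : X.dist w x = 0 := by omega
    have : w = x := deq0 hqm.1 hwx0
    subst this
    omega

private lemma refV7 (hqm : QuasiMedian X) {N : ℕ}
    (IH : ∀ (w a b b' a' : V),
      X.dist w a + X.dist w b + X.dist w b' + X.dist w a' ≤ N → TSq X a b b' a' →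
      X.dist w a' + X.dist w b = X.dist w a + X.dist w b')
    {v x y y' x' : V} (hsq : TSq X x y y' x')
    (hsum : X.dist v x + X.dist v y + X.dist v y' + X.dist v x' ≤ N + 1)
    (h1 : X.dist v y = X.dist v x + 1) (h2 : X.dist v x' = X.dist v x + 1)
    (h3 : X.dist v y' = X.dist v x) : False := by
  obtain ⟨axy, ayy', ay'x', ax'x, nxy', nyx', xney', ynex'⟩ := hsq
  set m := X.dist v x with hm
  obtain ⟨w, hxw, hy'w, hwd⟩ := hqm.2.2.2.2 v x y' y axy ayy'.symm xney'
    (by omega) (by omega)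
  have hvw : X.dist v w = m - 1 := by omega
  rcases Nat.lt_or_ge m 1 with hlt | hge
  · -- m = 0 : v = x = y'
    have hvx : v = x := deq0 hqm.1 (by omega)
    have hvy' : v = y' := deq0 hqm.1 (by omega)
    exact xney' (hvx ▸ hvy' ▸ rfl)
  · rcases Nat.lt_or_ge m 2 with hlt1 | hge2
    · -- m = 1 : w = v, K32
      have hm1 : m = 1 := by omega
      have hwv : w = v := (deq0 hqm.1 (by omega)).symm
      subst hwv
      have avx : X.Adj w x := hxw.symm
      have avy' : X.Adj w y' := hy'w.symm
      have hne_wy : w ≠ y := ned (show X.dist w y = 1 + 1 by omega)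
      have hne_wx' : w ≠ x' := ned (show X.dist w x' = 1 + 1 by omega)
      have hnadj_wy : ¬ X.Adj w y := nadjd2 (show X.dist w y = 2 by omega)
      have hnadj_wx' : ¬ X.Adj w x' := nadjd2 (show X.dist w x' = 2 by omega)
      exact hqm.2.2.1 ⟨w, y, x', x, y', hne_wy, ynex', hne_wx', xney',
        hnadj_wy, nyx', hnadj_wx', nxy',
        avx, avy', axy.symm, ayy', ax'x, ay'x'.symm⟩
    · -- m ≥ 2
      have dwx : X.dist w x = 1 := dadj hqm.1 hxw.symm
      have dwy' : X.dist w y' = 1 := dadj hqm.1 hy'w.symm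
      have dwy : 2 ≤ X.dist w y := by
        have := dtri hqm.1 v w y
        omega
      have dwx' : 2 ≤ X.dist w x' := by
        have := dtri hqm.1 v w x'
        omega
      have dwyle : X.dist w y ≤ 2 := by
        have := dstep hqm.1 axy w; omega
      have dwx'le : X.dist w x' ≤ 2 := by
        have := dstep hqm.1 ay'x' w; omega
      have heq := IH w x y y' x' (by omega)
        ⟨axy, ayy', ay'x', ax'x, nxy', nyx', xney', ynex'⟩
      omega

private lemma refV8 (hqm : QuasiMedian X) {N : ℕ}
    (IH : ∀ (w a b b' a' : V),
      X.dist w a + X.dist w b + X.dist w b' + X.dist w a' ≤ N → TSq X a b b' a' →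
      X.dist w a' + X.dist w b = X.dist w a + X.dist w b')
    {v x y y' x' : V} (hsq : TSq X x y y' x')
    (hsum : X.dist v x + X.dist v y + X.dist v y' + X.dist v x' ≤ N + 1)
    (h1 : X.dist v y = X.dist v x + 1) (h2 : X.dist v x' = X.dist v x + 1)
    (h3 : X.dist v y' = X.dist v x + 1) : False := by
  obtain ⟨axy, ayy', ay'x', ax'x, nxy', nyx', xney', ynex'⟩ := hsq
  set m := X.dist v x with hm
  rcases Nat.lt_or_ge m 1 with hlt | hge
  · -- m = 0 : v = x, but then Adj x y' from distance one
    have hvx : v = x := deq0 hqm.1 (by omega)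
    subst hvx
    exact nxy' (adjd (by omega))
  · -- get s
    obtain ⟨sv, hys, hy's, hsd⟩ := hqm.2.2.2.1 v y y' ayy' (by omega)
    have hvs : X.dist v sv = m := by omega
    have hsx : sv ≠ x := by
      intro hh; subst hh; exact nxy' hy's.symm
    rcases Nat.lt_or_ge m 2 with hlt1 | hge2
    · -- m = 1, the hard case
      have hm1 : m = 1 := by omega
      have avx : X.Adj v x := adjd (by omega)
      have avs : X.Adj v sv := adjd (by omega)
      -- t
      obtain ⟨t, hx't, hy't, htd⟩ := hqm.2.2.2.1 v x' y' ay'x'.symm (by omega)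
      have hvt : X.dist v t = 1 := by omega
      have avt : X.Adj v t := adjd hvt
      have htx : t ≠ x := by
        intro hh; subst hh; exact nxy' hy't.symm
      have hst : sv ≠ t := by
        intro hh; subst hh
        exact hqm.2.1 ⟨y', sv, y, x', hy's, ayy'.symm, ay'x', hys.symm, hx't.symm, nyx', ynex'⟩
      have hnst : ¬ X.Adj sv t := by
        intro hh
        exact hqm.2.1 ⟨sv, t, v, y', hh, avs.symm, hy's.symm, avt.symm, hy't.symm,
          nadjd2 (show X.dist v y' = 2 by omega), ned (show X.dist v y' = 1 + 1 by omega)⟩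
      have hnxs : ¬ X.Adj x sv := by
        intro hh
        exact hqm.2.1 ⟨y, sv, x, y', hys, axy.symm, ayy', hh.symm, hy's.symm, nxy', xney'⟩
      have hnxt : ¬ X.Adj x t := by
        intro hh
        exact hqm.2.1 ⟨x', t, x, y', hx't, ax'x, ay'x'.symm, hh.symm, hy't.symm, nxy', xney'⟩
      have hyt : y ≠ t := by
        intro hh; subst hh; exact nyx' hx't.symm
      have hnyt : ¬ X.Adj y t := by
        intro hh
        exact hqm.2.1 ⟨y', t, y, x', hy't, ayy'.symm, ay'x', hh.symm, hx't.symm, nyx', ynex'⟩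
      have dyt : X.dist y t = 2 := dtwo hqm.1 hyt hnyt ayy' hy't
      have dyv : X.dist y v = 2 := by rw [dcomm]; omega
      obtain ⟨z, hvz, htz, hzd⟩ := hqm.2.2.2.1 y v t avt (by omega)
      have dyz : X.dist y z = 1 := by omega
      have ayz : X.Adj y z := adjd dyz
      have hzx : z ≠ x := by
        intro hh; subst hh; exact hnxt (htz.symm)
      have hnzx : ¬ X.Adj z x := by
        intro hh
        exact hqm.2.1 ⟨v, z, x, t, hvz, avx, avt, hh, htz.symm, hnxt, htx.symm⟩
      have hzs : z ≠ sv := by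
        intro hh; subst hh; exact hnst htz.symm
      have hnzs : ¬ X.Adj z sv := by
        intro hh
        exact hqm.2.1 ⟨v, z, sv, t, hvz, avs, avt, hh, htz.symm, hnst, hst⟩
      have hvy : ¬ X.Adj v y := nadjd2 (show X.dist v y = 2 by omega)
      have hvyne : v ≠ y := ned (show X.dist v y = 1 + 1 by omega)
      exact hqm.2.2.1 ⟨x, sv, z, v, y, (fun hh => hsx hh.symm), (fun hh => hzs hh.symm),
        (fun hh => hzx hh.symm), hvyne,
        (fun hh => hnxs hh), (fun hh => hnzs hh.symm), (fun hh => hnzx hh.symm), hvy,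
        avx.symm, axy, avs.symm, hys.symm, hvz.symm, ayz.symm⟩
    · -- m ≥ 2
      obtain ⟨w, hxw, hsw, hwd⟩ := hqm.2.2.2.2 v x sv y axy hys.symm hsx.symm
        (by omega) (by omega)
      have hvw : X.dist v w = m - 1 := by omega
      have dwx : X.dist w x = 1 := dadj hqm.1 hxw.symm
      have dws : X.dist w sv = 1 := dadj hqm.1 hsw.symm
      have dwy : X.dist w y = 2 := by
        have l1 := dtri hqm.1 v w y
        have l2 := dstep hqm.1 axy w
        omega
      have dwy' : X.dist w y' = 2 := by
        have l1 := dtri hqm.1 v w y'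
        have l2 := dstep hqm.1 hy's.symm w
        omega
      have dwx' : X.dist w x' = 2 := by
        have l1 := dtri hqm.1 v w x'
        have l2 := dstep hqm.1 ax'x.symm w
        omega
      have heq := IH w x y y' x' (by omega)
        ⟨axy, ayy', ay'x', ax'x, nxy', nyx', xney', ynex'⟩
      omega

private lemma sqU_aux (hqm : QuasiMedian X) {N : ℕ}
    (IH : ∀ (w a b b' a' : V),
      X.dist w a + X.dist w b + X.dist w b' + X.dist w a' ≤ N → TSq X a b b' a' →
      X.dist w a' + X.dist w b = X.dist w a + X.dist w b')
    {v x y y' x' : V} (hsq : TSq X x y y' x')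
    (hsum : X.dist v x + X.dist v y + X.dist v y' + X.dist v x' ≤ N + 1)
    (hm1 : X.dist v x ≤ X.dist v y) (hm2 : X.dist v x ≤ X.dist v y')
    (hm3 : X.dist v x ≤ X.dist v x')
    (hne : X.dist v x' + X.dist v y ≠ X.dist v x + X.dist v y') : False := by
  obtain ⟨axy, ayy', ay'x', ax'x, nxy', nyx', xney', ynex'⟩ := hsq
  have hsq' : TSq X x y y' x' := ⟨axy, ayy', ay'x', ax'x, nxy', nyx', xney', ynex'⟩
  set m := X.dist v x with hm
  have by1 : X.dist v y ≤ m + 1 := dstep hqm.1 axy v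
  have bx1 : X.dist v x' ≤ m + 1 := dstep hqm.1 ax'x.symm v
  have by'1 : X.dist v y' ≤ X.dist v y + 1 := dstep hqm.1 ayy' v
  have by'2 : X.dist v y' ≤ X.dist v x' + 1 := dstep hqm.1 ay'x'.symm v
  have hy : X.dist v y = m ∨ X.dist v y = m + 1 := by omega
  have hx' : X.dist v x' = m ∨ X.dist v x' = m + 1 := by omega
  rcases hy with hy | hy <;> rcases hx' with hx' | hx'
  · -- (m, m) : violation iff dy' = m+1
    have : X.dist v y' = m + 1 := by omega
    exact refV2 hqm IH (v := v) hsq' hsum (by omega) (by omega) (by omega)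
  · -- (m, m+1) : violation iff dy' = m
    have hdy' : X.dist v y' = m := by omega
    exact refV2 hqm IH (v := v) hsq'.refl (by omega) (by omega) (by omega) (by omega)
  · -- (m+1, m) : violation iff dy' = m
    have hdy' : X.dist v y' = m := by omega
    exact refV2 hqm IH (v := v) hsq'.rot.rot.refl (by omega) (by omega) (by omega) (by omega)
  · -- (m+1, m+1) : violation iff dy' ∈ {m, m+1}
    have hdy' : X.dist v y' = m ∨ X.dist v y' = m + 1 := by omega
    rcases hdy' with hdy' | hdy'
    · exact refV7 hqm IH hsq' hsum (by omega) (by omega) (by omega)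
    · exact refV8 hqm IH hsq' hsum (by omega) (by omega) (by omega)

private lemma sqU_N (hqm : QuasiMedian X) : ∀ N : ℕ, ∀ v x y y' x' : V,
    X.dist v x + X.dist v y + X.dist v y' + X.dist v x' ≤ N → TSq X x y y' x' →
    X.dist v x' + X.dist v y = X.dist v x + X.dist v y' := by
  intro N
  induction N with
  | zero =>
      intro v x y y' x' hsum hsq
      exfalso
      have hvx : v = x := deq0 hqm.1 (by omega)
      have hvy : v = y := deq0 hqm.1 (by omega)
      exact (dne hsq.1) (hvx ▸ hvy ▸ rfl)
  | succ N ih =>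
      intro v x y y' x' hsum hsq
      by_contra hne
      rcases le_or_gt (X.dist v x) (X.dist v y) with e1 | e1
      · rcases le_or_gt (X.dist v x) (X.dist v y') with e2 | e2
        · rcases le_or_gt (X.dist v x) (X.dist v x') with e3 | e3
          · exact sqU_aux hqm ih (v := v) hsq hsum e1 e2 e3 hne
          · -- x' strictly minimal among these: use rot³ square (x', x, y, y')
            exact sqU_aux hqm ih (v := v) hsq.rot.rot.rot (by omega) (by omega) (by omega)
              (by omega) (by omega)
        · -- y' small : rot² square (y', x', x, y)
          rcases le_or_gt (X.dist v y') (X.dist v x') with e3 | e3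
          · exact sqU_aux hqm ih (v := v) hsq.rot.rot (by omega) (by omega) (by omega)
              (by omega) (by omega)
          · exact sqU_aux hqm ih (v := v) hsq.rot.rot.rot (by omega) (by omega) (by omega)
              (by omega) (by omega)
      · -- y < x
        rcases le_or_gt (X.dist v y) (X.dist v y') with e2 | e2
        · rcases le_or_gt (X.dist v y) (X.dist v x') with e3 | e3
          · exact sqU_aux hqm ih (v := v) hsq.rot (by omega) (by omega) (by omega)
              (by omega) (by omega)
          · rcases le_or_gt (X.dist v x') (X.dist v y') with e4 | e4
            · exact sqU_aux hqm ih (v := v) hsq.rot.rot.rot (by omega) (by omega) (by omega)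
                (by omega) (by omega)
            · exact sqU_aux hqm ih (v := v) hsq.rot.rot (by omega) (by omega) (by omega)
                (by omega) (by omega)
        · rcases le_or_gt (X.dist v y') (X.dist v x') with e3 | e3
          · exact sqU_aux hqm ih (v := v) hsq.rot.rot (by omega) (by omega) (by omega)
              (by omega) (by omega)
          · exact sqU_aux hqm ih (v := v) hsq.rot.rot.rot (by omega) (by omega) (by omega)
              (by omega) (by omega)

end sqUproof

/-- Lemma U : for every vertex `v` and true square, `d v x' + d v y = d v x + d v y'`. -/
lemma sqU (hqm : QuasiMedian X) {x y y' x' : V} (h : TSq X x y y' x') (v : V) :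
    X.dist v x' + X.dist v y = X.dist v x + X.dist v y' :=
  sqU_N hqm (X.dist v x + X.dist v y + X.dist v y' + X.dist v x') v x y y' x' le_rfl h

/-! ### gates vs triangles and squares -/

lemma tri_min (hqm : QuasiMedian X) {x y z g : V} (hxy : X.Adj x y) (hyz : X.Adj y z)
    (hxz : X.Adj x z) (h1 : X.dist g x = X.dist g z) (h2 : X.dist g y = X.dist g x + 1) :
    False := by
  rcases Nat.eq_zero_or_pos (X.dist g x) with h0 | hpos
  · have hgx : g = x := deq0 hqm.1 h0
    have hgz : g = z := deq0 hqm.1 (by omega)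
    exact (dne hxz) (hgx ▸ hgz ▸ rfl)
  · obtain ⟨w, hwx, hwz, hwd⟩ := hqm.2.2.2.1 g x z hxz h1
    by_cases hwy : w = y
    · subst hwy; omega
    · by_cases hadj : X.Adj w y
      · have := dstep hqm.1 hadj g
        omega
      · exact hqm.2.1 ⟨x, z, w, y, hxz, hwx, hxy, hwz, hyz.symm, hadj, hwy⟩

lemma tri_gates_aux (hqm : QuasiMedian X) {K : Set V} (hK : MClique X K)
    {x y z γx γy γz : V} (hxy : X.Adj x y) (hyz : X.Adj y z) (hxz : X.Adj x z)
    (hgx : gateSpec X K x γx) (hgy : gateSpec X K y γy) (hgz : gateSpec X K z γz)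
    (hne : γx ≠ γy) (heq : γz = γx) : False := by
  subst heq
  have dxgy : X.dist x γy = X.dist x γz + 1 := hgx.2 γy hgy.1 (Ne.symm hne)
  have dygx : X.dist y γz = X.dist y γy + 1 := hgy.2 γz hgx.1 hne
  have dzgy : X.dist z γy = X.dist z γz + 1 := hgz.2 γy hgy.1 (Ne.symm hne)
  have c1 : X.dist x γy ≤ X.dist y γy + 1 := dnbr hqm.1 hxy γy
  have c2 : X.dist y γz ≤ X.dist x γz + 1 := dnbr hqm.1 hxy.symm γz
  have c3 : X.dist z γy ≤ X.dist y γy + 1 := dnbr hqm.1 hyz.symm γy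
  have c4 : X.dist y γz ≤ X.dist z γz + 1 := dnbr hqm.1 hyz γz
  refine tri_min hqm hxy hyz hxz (g := γz) ?_ ?_
  · rw [dcomm γz x, dcomm γz z]; omega
  · rw [dcomm γz y, dcomm γz x]; omega

lemma tri_gates (hqm : QuasiMedian X) {K : Set V} (hK : MClique X K)
    {x y z γx γy γz : V} (hxy : X.Adj x y) (hyz : X.Adj y z) (hxz : X.Adj x z)
    (hgx : gateSpec X K x γx) (hgy : gateSpec X K y γy) (hgz : gateSpec X K z γz)
    (hne : γx ≠ γy) : γx ≠ γz ∧ γy ≠ γz := by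
  constructor
  · intro hh; exact tri_gates_aux hqm hK hxy hyz hxz hgx hgy hgz hne hh.symm
  · intro hh
    exact tri_gates_aux hqm hK hxy.symm hxz hyz hgy hgx hgz (Ne.symm hne) hh.symm

lemma square_gates (hqm : QuasiMedian X) {K : Set V} (hK : MClique X K)
    {x y y' x' γx γy γ : V} (hsq : TSq X x y y' x')
    (hgx : gateSpec X K x γx) (hgy : gateSpec X K y γy)
    (hgx' : gateSpec X K x' γ) (hgy' : gateSpec X K y' γ)
    (hne : γx ≠ γy) : False := by
  have U1 := sqU hqm hsq γx
  have U2 := sqU hqm hsq γy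
  rw [dcomm γx x', dcomm γx y, dcomm γx x, dcomm γx y'] at U1
  rw [dcomm γy x', dcomm γy y, dcomm γy x, dcomm γy y'] at U2
  have hyx : X.dist y γx = X.dist y γy + 1 := hgy.2 γx hgx.1 hne
  have hxy : X.dist x γy = X.dist x γx + 1 := hgx.2 γy hgy.1 (Ne.symm hne)
  by_cases h1 : γ = γx
  · subst h1
    have e1 : X.dist x' γy = X.dist x' γ + 1 := hgx'.2 γy hgy.1 (Ne.symm hne)
    have e2 : X.dist y' γy = X.dist y' γ + 1 := hgy'.2 γy hgy.1 (Ne.symm hne)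
    omega
  · by_cases h2 : γ = γy
    · subst h2
      have e1 : X.dist x' γx = X.dist x' γ + 1 := hgx'.2 γx hgx.1 (fun hh => h1 hh.symm)
      have e2 : X.dist y' γx = X.dist y' γ + 1 := hgy'.2 γx hgx.1 (fun hh => h1 hh.symm)
      omega
    · have e1 : X.dist x' γx = X.dist x' γ + 1 := hgx'.2 γx hgx.1 (fun hh => h1 hh.symm)
      have e2 : X.dist y' γx = X.dist y' γ + 1 := hgy'.2 γx hgx.1 (fun hh => h1 hh.symm)
      have e3 : X.dist x' γy = X.dist x' γ + 1 := hgx'.2 γy hgy.1 (fun hh => h2 hh.symm)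
      have e4 : X.dist y' γy = X.dist y' γ + 1 := hgy'.2 γy hgy.1 (fun hh => h2 hh.symm)
      omega

/-! ### the invariant along chains -/

/-- the main invariant theorem: along a hyperplane, endpoints of dual edges always have
distinct gates in a fixed maximal clique `K` containing one dual edge. -/
theorem sameHyp_gates (hqm : QuasiMedian X) {K : Set V} (hK : MClique X K)
    {u₀ v₀ : V} (hu : u₀ ∈ K) (hv : v₀ ∈ K) (huv : u₀ ≠ v₀) :
    ∀ f, SameHyp X s(u₀, v₀) f → ∀ a b : V, f = s(a, b) →
      ∀ γa γb : V, gateSpec X K a γa → gateSpec X K b γb → γa ≠ γb := by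
  classical
  have hKne : K.Nonempty := ⟨u₀, hu⟩
  set P : Sym2 V → Prop := fun f => ∀ a b : V, f = s(a, b) →
    ∀ γa γb : V, gateSpec X K a γa → gateSpec X K b γb → γa ≠ γb with hPdef
  have mkP : ∀ x y : V,
      (∀ γ1 γ2 : V, gateSpec X K x γ1 → gateSpec X K y γ2 → γ1 ≠ γ2) → P s(x, y) := by
    intro x y h a b hab γa γb ha hb
    rcases Sym2.eq_iff.1 hab with ⟨rfl, rfl⟩ | ⟨rfl, rfl⟩
    · exact h γa γb ha hb
    · exact (h γb γa hb ha).symm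
  have hstep : ∀ e f, EdgeRel X e f → P e → P f := by
    intro e f hef hpe
    rcases hef with ⟨a, b, c, hab, hbc, hac, he, hf⟩ |
      ⟨a, b, c, d, hab, hbc, hcd, hda, hac, hbd, hef⟩
    · -- triangle case
      obtain ⟨γa, hγa⟩ := exists_gate hqm hK hKne a
      obtain ⟨γb, hγb⟩ := exists_gate hqm hK hKne b
      obtain ⟨γc, hγc⟩ := exists_gate hqm hK hKne c
      simp only [Set.mem_insert_iff, Set.mem_singleton_iff] at he hf
      have hpair : γa ≠ γb ∧ γb ≠ γc ∧ γa ≠ γc := by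
        rcases he with rfl | rfl | rfl
        · have d1 : γa ≠ γb := hpe a b rfl γa γb hγa hγb
          have t := tri_gates hqm hK hab hbc hac hγa hγb hγc d1
          exact ⟨d1, t.2, t.1⟩
        · have d1 : γb ≠ γc := hpe b c rfl γb γc hγb hγc
          have t := tri_gates hqm hK hbc hac.symm hab.symm hγb hγc hγa d1
          exact ⟨t.1.symm, d1, (t.2).symm⟩
        · have d1 : γa ≠ γc := hpe a c rfl γa γc hγa hγc
          have t := tri_gates hqm hK hac hbc.symm hab hγa hγc hγb d1
          exact ⟨t.1, (t.2).symm, d1⟩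
      rcases hf with rfl | rfl | rfl
      · exact mkP a b (fun γ1 γ2 h1 h2 => by
          rw [gate_unique h1 hγa, gate_unique h2 hγb]; exact hpair.1)
      · exact mkP b c (fun γ1 γ2 h1 h2 => by
          rw [gate_unique h1 hγb, gate_unique h2 hγc]; exact hpair.2.1)
      · exact mkP a c (fun γ1 γ2 h1 h2 => by
          rw [gate_unique h1 hγa, gate_unique h2 hγc]; exact hpair.2.2)
    · -- square case
      have core : ∀ a b c d : V, X.Adj a b → X.Adj b c → X.Adj c d → X.Adj d a →
          a ≠ c → b ≠ d → P s(a, b) → P s(d, c) := by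
        intro a b c d hab hbc hcd hda hac hbd hp
        obtain ⟨γa, hγa⟩ := exists_gate hqm hK hKne a
        obtain ⟨γb, hγb⟩ := exists_gate hqm hK hKne b
        obtain ⟨γc, hγc⟩ := exists_gate hqm hK hKne c
        obtain ⟨γd, hγd⟩ := exists_gate hqm hK hKne d
        have d1 : γa ≠ γb := hp a b rfl γa γb hγa hγb
        have hdc : γd ≠ γc := by
          by_cases h1 : X.Adj a c
          · have t1 := tri_gates hqm hK hab hbc h1 hγa hγb hγc d1
            have t2 := tri_gates hqm hK h1 hcd hda.symm hγa hγc hγd t1.1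
            exact (t2.2).symm
          · by_cases h2 : X.Adj b d
            · have t1 := tri_gates hqm hK hab h2 hda.symm hγa hγb hγd d1
              have t2 := tri_gates hqm hK h2 hcd.symm hbc hγb hγd hγc t1.2
              exact t2.2
            · have hsq : TSq X a b c d := ⟨hab, hbc, hcd, hda, h1, h2, hac, hbd⟩
              intro hh
              exact square_gates hqm hK hsq hγa hγb (γ := γc) (by rw [← hh]; exact hγd) hγc d1
        exact mkP d c (fun γ1 γ2 h1 h2 => by
          rw [gate_unique h1 hγd, gate_unique h2 hγc]; exact hdc)
      rcases hef with ⟨rfl, rfl⟩ | ⟨rfl, rfl⟩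
      · exact core a b c d hab hbc hcd hda hac hbd hpe
      · exact core d c b a hcd.symm hbc.symm hab.symm hda.symm hbd.symm hac.symm hpe
  have hiff : ∀ e f, SameHyp X e f → (P e ↔ P f) := by
    intro e f h
    induction h with
    | rel e' f' hef => exact ⟨hstep e' f' hef, hstep f' e' (edgeRel_symm hef)⟩
    | refl e' => exact Iff.rfl
    | symm e' f' _ ih => exact ih.symm
    | trans e' f' g' _ _ ih1 ih2 => exact ih1.trans ih2
  have base : P s(u₀, v₀) := mkP u₀ v₀ (fun γ1 γ2 h1 h2 => by
    rw [gate_unique h1 (gate_self hqm hK hu), gate_unique h2 (gate_self hqm hK hv)]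
    exact huv)
  intro f hf a b hfab γa γb ha hb
  exact ((hiff _ _ hf).1 base) a b hfab γa γb ha hb

/-- two consecutive edges of a geodesic are not dual to the same hyperplane. -/
lemma no_sameHyp_consec (hqm : QuasiMedian X) {a b c : V} (hab : X.Adj a b) (hbc : X.Adj b c)
    (hd : X.dist a c = 2) (hsh : SameHyp X s(a, b) s(b, c)) : False := by
  obtain ⟨K, hK, haK, hbK⟩ := exists_mclique hab
  obtain ⟨γc, hγc⟩ := exists_gate hqm hK ⟨a, haK⟩ c
  have hne : b ≠ γc := sameHyp_gates hqm hK haK hbK (dne hab) s(b, c) hsh b c rfl b γc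
    (gate_self hqm hK hbK) hγc
  have h1 : X.dist c b = X.dist c γc + 1 := hγc.2 b hbK (Ne.symm (Ne.symm hne))
  have h2 : X.dist c b = 1 := by rw [dcomm]; exact dadj hqm.1 hbc
  have h3 : c = γc := deq0 hqm.1 (by omega)
  have hcK : c ∈ K := h3 ▸ hγc.1
  have hadj : X.Adj a c := hK.1 a haK c hcK (ned (show X.dist a c = 1 + 1 from hd))
  rw [dadj hqm.1 hadj] at hd
  omega

/-- all edges of a clique are dual to the same hyperplane. -/
lemma sh_tri_mem {a b c : V} (hab : X.Adj a b) (hbc : X.Adj b c) (hac : X.Adj a c)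
    {e f : Sym2 V} (he : e ∈ ({s(a, b), s(b, c), s(a, c)} : Set (Sym2 V)))
    (hf : f ∈ ({s(a, b), s(b, c), s(a, c)} : Set (Sym2 V))) : SameHyp X e f :=
  sh_rel (Or.inl ⟨a, b, c, hab, hbc, hac, he, hf⟩)

lemma clique_sh {K : Set V} (hK : MClique X K) {a b c d : V}
    (ha : a ∈ K) (hb : b ∈ K) (hc : c ∈ K) (hd : d ∈ K) (hab : a ≠ b) (hcd : c ≠ d) :
    SameHyp X s(a, b) s(c, d) := by
  classical
  have adj : ∀ x ∈ K, ∀ y ∈ K, x ≠ y → X.Adj x y := hK.1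
  have m1 : ∀ x y z : V, s(x, y) ∈ ({s(x, y), s(y, z), s(x, z)} : Set (Sym2 V)) := by
    intro x y z; exact Set.mem_insert _ _
  have m2 : ∀ x y z : V, s(y, z) ∈ ({s(x, y), s(y, z), s(x, z)} : Set (Sym2 V)) := by
    intro x y z; exact Set.mem_insert_of_mem _ (Set.mem_insert _ _)
  have m3 : ∀ x y z : V, s(x, z) ∈ ({s(x, y), s(y, z), s(x, z)} : Set (Sym2 V)) := by
    intro x y z; exact Set.mem_insert_of_mem _ (Set.mem_insert_of_mem _ rfl)
  by_cases h1 : a = c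
  · subst h1
    by_cases h2 : b = d
    · subst h2; exact sh_refl _
    · exact sh_tri_mem (adj a ha b hb hab) (adj b hb d hd h2) (adj a ha d hd hcd)
        (m1 a b d) (m3 a b d)
  · by_cases h2 : a = d
    · subst h2
      by_cases h3 : b = c
      · subst h3; rw [Sym2.eq_swap]; exact sh_refl _
      · rw [show s(c, a) = s(a, c) from Sym2.eq_swap]
        exact sh_tri_mem (adj a ha b hb hab) (adj b hb c hc h3)
          (adj a ha c hc (Ne.symm hcd)) (m1 a b c) (m3 a b c)
    · by_cases h3 : b = c
      · subst h3
        exact sh_tri_mem (adj a ha b hb hab) (adj b hb d hd hcd) (adj a ha d hd h2)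
          (m1 a b d) (m2 a b d)
      · by_cases h4 : b = d
        · subst h4
          rw [show s(c, b) = s(b, c) from Sym2.eq_swap]
          exact sh_tri_mem (adj a ha b hb hab) (adj b hb c hc h3)
            (adj a ha c hc h1) (m1 a b c) (m2 a b c)
        · have e1 : SameHyp X s(a, b) s(a, c) :=
            sh_tri_mem (adj a ha b hb hab) (adj b hb c hc h3) (adj a ha c hc h1)
              (m1 a b c) (m3 a b c)
          have e2 : SameHyp X s(a, c) s(c, d) :=
            sh_tri_mem (adj a ha c hc h1) (adj c hc d hd hcd) (adj a ha d hd h2)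
              (m1 a c d) (m2 a c d)
          exact sh_trans e1 e2

/-- "parallelism": an edge not dual to the hyperplane of `K` does not change the gate. -/
lemma gate_par (hqm : QuasiMedian X) {K : Set V} (hK : MClique X K)
    {u₀ v₀ : V} (hu : u₀ ∈ K) (hv : v₀ ∈ K) (huv : u₀ ≠ v₀)
    {a b γa γb : V} (hab : X.Adj a b) (hns : ¬ SameHyp X s(a, b) s(u₀, v₀))
    (hga : gateSpec X K a γa) (hgb : gateSpec X K b γb) : γa = γb := by
  by_contra hne
  have e1 : X.dist a γb = X.dist a γa + 1 := hga.2 γb hgb.1 (Ne.symm hne)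
  have e2 : X.dist b γa = X.dist b γb + 1 := hgb.2 γa hga.1 hne
  have c1 : X.dist a γb ≤ X.dist b γb + 1 := dnbr hqm.1 hab γb
  have c2 : X.dist b γa ≤ X.dist a γa + 1 := dnbr hqm.1 hab.symm γa
  have hadjγ : X.Adj γa γb := hK.1 γa hga.1 γb hgb.1 hne
  have hcross := cross_full hqm (X.dist a γa) a b γa γb hab hadjγ rfl (by omega)
    (by omega) (by omega)
  exact hns (sh_trans hcross (clique_sh hK hga.1 hgb.1 hu hv hne huv))

/-- gates compose along parallel cliques of the same hyperplane. -/
lemma gate_comp (hqm : QuasiMedian X) {K L : Set V} (hK : MClique X K) (hL : MClique X L)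
    {u₀ v₀ a₀ b₀ : V} (hu : u₀ ∈ K) (hv : v₀ ∈ K) (huv : u₀ ≠ v₀)
    (ha : a₀ ∈ L) (hb : b₀ ∈ L) (hab : a₀ ≠ b₀)
    (hsh : SameHyp X s(u₀, v₀) s(a₀, b₀))
    {k l γ : V} (hk : k ∈ K) (hgl : gateSpec X L k l) (hgk : gateSpec X K l γ) : γ = k := by
  by_contra hne
  have hlK := hgl.1
  have hγK := hgk.1
  have e1 : X.dist l k = X.dist l γ + 1 := hgk.2 k hk (fun hh => hne hh.symm)
  obtain ⟨l', hl'⟩ := exists_gate hqm hL ⟨a₀, ha⟩ γ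
  have hll' : l' = l := by
    by_contra hne2
    have f1 : X.dist k l' = X.dist k l + 1 := hgl.2 l' hl'.1 hne2
    have f2 : X.dist γ l' ≤ X.dist γ l := by
      rcases eq_or_ne l l' with hc | hc
      · rw [hc]
      · have := hl'.2 l hlK hc
        omega
    have f3 := dtri hqm.1 k γ l'
    have f4 : X.dist k γ = 1 := dadj hqm.1 (hK.1 k hk γ hγK (fun hh => hne hh.symm))
    have f5 : X.dist γ l = X.dist l γ := dcomm γ l
    have f6 : X.dist l k = X.dist k l := dcomm l k
    omega
  subst hll'
  have hkγ : k ≠ γ := fun hh => hne hh.symm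
  have hshK : SameHyp X s(a₀, b₀) s(k, γ) :=
    sh_trans (sh_symm hsh) (clique_sh hK hu hv hk hγK huv hkγ)
  exact (sameHyp_gates hqm hL ha hb hab s(k, γ) hshK k γ rfl l' l' hgl hl') rfl

/-! ### the swap -/

lemma exists_swap (hqm : QuasiMedian X) {u v w : V} (huv : X.Adj u v) (hvw : X.Adj v w)
    (hns : ¬ SameHyp X s(u, v) s(v, w)) (htr : Transverse X s(u, v) s(v, w))
    (hd : X.dist u w = 2) :
    ∃ z : V, X.Adj u z ∧ X.Adj w z ∧ SameHyp X s(u, z) s(v, w) ∧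
      SameHyp X s(z, w) s(u, v) := by
  classical
  obtain ⟨e₁, f₁, he₁, hf₁, hsp⟩ := htr
  obtain ⟨a, b, c, d₀, hab, hac, hbd, hcd, hbc, had, rfl, rfl⟩ := hsp
  -- he₁ : SameHyp s(u,v) s(a,b), hf₁ : SameHyp s(v,w) s(a,c)
  have hJ : ∀ e' : Sym2 V, SameHyp X e' s(u, v) → SameHyp X e' s(v, w) → False :=
    fun e' h1 h2 => hns (sh_trans (sh_symm h1) h2)
  have hnad : ¬ X.Adj a d₀ := by
    intro hadj
    exact hJ s(a, d₀) (sh_trans (sh_symm (sh_tri hab hadj hbd)) (sh_symm he₁))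
      (sh_trans (sh_symm (sh_tri hac hadj hcd)) (sh_symm hf₁))
  obtain ⟨K, hK, huK, hvK⟩ := exists_mclique huv
  obtain ⟨K', hK', hvK', hwK'⟩ := exists_mclique hvw
  obtain ⟨L, hL, haL, hbL⟩ := exists_mclique hab
  obtain ⟨bs, hbs⟩ := exists_gate hqm hL ⟨a, haL⟩ u
  obtain ⟨γ1, hγ1⟩ := exists_gate hqm hK ⟨u, huK⟩ bs
  have hγ1u : γ1 = u :=
    gate_comp hqm hK hL huK hvK (dne huv) haL hbL (dne hab) he₁ huK hbs hγ1
  rw [hγ1u] at hγ1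
  have hbd_ac : SameHyp X s(b, d₀) s(a, c) :=
    sh_sq hbd hcd.symm hac.symm hab hbc (Ne.symm had)
  have hstep2 : ∃ s2 : V, X.Adj bs s2 ∧ SameHyp X s(bs, s2) s(v, w) := by
    by_cases hba : bs = a
    · rw [hba]
      exact ⟨c, hac, sh_symm hf₁⟩
    · by_cases hbb : bs = b
      · rw [hbb]
        exact ⟨d₀, hbd, sh_trans hbd_ac (sh_symm hf₁)⟩
      · have habs : X.Adj a bs := hL.1 a haL bs hbs.1 (fun hh => hba hh.symm)
        have hbbs : X.Adj b bs := hL.1 b hbL bs hbs.1 (fun hh => hbb hh.symm)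
        have hbsc : bs ≠ c := by
          intro hh
          have hcL : c ∈ L := hh ▸ hbs.1
          exact hJ s(a, c)
            (sh_trans (clique_sh hL haL hcL haL hbL (dne hac) (dne hab)) (sh_symm he₁))
            (sh_symm hf₁)
        have hnbsc : ¬ X.Adj bs c := by
          intro hh
          exact hJ s(a, bs)
            (sh_trans (clique_sh hL haL hbs.1 haL hbL (fun h2 => hba h2.symm) (dne hab))
              (sh_symm he₁))
            (sh_trans (sh_tri habs hac hh) (sh_symm hf₁))
        have hbsd : bs ≠ d₀ := by
          intro hh
          exact hnbsc (by rw [hh]; exact hcd.symm)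
        have hnbsd : ¬ X.Adj bs d₀ := by
          intro hh
          exact hJ s(b, bs)
            (sh_trans (clique_sh hL hbL hbs.1 haL hbL (fun h2 => hbb h2.symm) (dne hab))
              (sh_symm he₁))
            (sh_trans (sh_tri hbbs hbd hh) (sh_trans hbd_ac (sh_symm hf₁)))
        have hdbsc : X.dist bs c = 2 := dtwo hqm.1 hbsc hnbsc habs.symm hac
        have hdbsd : X.dist bs d₀ = 2 := dtwo hqm.1 hbsd hnbsd hbbs.symm hbd
        obtain ⟨s2, hcs2, hds2, hs2d⟩ := hqm.2.2.2.1 bs c d₀ hcd (by omega)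
        have habs2 : X.Adj bs s2 := adjd (by omega)
        have hs2a : s2 ≠ a := fun hh => hnad (hh ▸ hds2.symm)
        exact ⟨s2, habs2,
          sh_trans (sh_sq habs2 hcs2.symm hac.symm habs hbsc hs2a) (sh_symm hf₁)⟩
  obtain ⟨s2, hads2, hshs2⟩ := hstep2
  obtain ⟨L2, hL2, hbsL2, hs2L2⟩ := exists_mclique hads2
  obtain ⟨g, hg⟩ := exists_gate hqm hL2 ⟨bs, hbsL2⟩ w
  obtain ⟨γ2, hγ2⟩ := exists_gate hqm hK' ⟨v, hvK'⟩ g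
  have hγ2w : γ2 = w :=
    gate_comp hqm hK' hL2 hvK' hwK' (dne hvw) hbsL2 hs2L2 (dne hads2) (sh_symm hshs2)
      hwK' hg hγ2
  rw [hγ2w] at hγ2
  obtain ⟨γ3, hγ3⟩ := exists_gate hqm hK ⟨u, huK⟩ g
  have hγ3u : γ3 = u := by
    rcases eq_or_ne g bs with hgb | hgb
    · subst hgb
      exact gate_unique hγ3 hγ1
    · have hadjbsg : X.Adj bs g := hL2.1 bs hbsL2 g hg.1 (Ne.symm hgb)
      have hnsH : ¬ SameHyp X s(bs, g) s(u, v) := by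
        intro hh
        exact hJ s(bs, g) hh
          (sh_trans (clique_sh hL2 hbsL2 hg.1 hbsL2 hs2L2 (Ne.symm hgb) (dne hads2)) hshs2)
      exact (gate_par hqm hK huK hvK (dne huv) hadjbsg hnsH hγ1 hγ3).symm
  rw [hγ3u] at hγ3
  have d1 : X.dist g v = X.dist g u + 1 := hγ3.2 v hvK (Ne.symm (dne huv))
  have d2 : X.dist g v = X.dist g w + 1 := hγ2.2 v hvK' (dne hvw)
  have huw : u ≠ w := ned (show X.dist u w = 1 + 1 from hd)
  have hr : 1 ≤ X.dist g u := by
    rcases Nat.eq_zero_or_pos (X.dist g u) with h0 | hpos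
    · have hgu : g = u := deq0 hqm.1 h0
      have hgw : g = w := deq0 hqm.1 (by omega)
      exact absurd (hgu.symm.trans hgw) huw
    · omega
  obtain ⟨z, huz, hwz, hzd⟩ := hqm.2.2.2.2 g u w v huv hvw.symm huw (by omega) (by omega)
  have hzv : z ≠ v := by
    intro hh; rw [hh] at hzd; omega
  exact ⟨z, huz, hwz, sh_sq huz hwz.symm hvw.symm huv.symm huw hzv,
    sh_sq hwz.symm hvw.symm huv.symm huz hzv (Ne.symm huw)⟩

/-! ### transfer lemmas for Transverse / Tangent / InCarrier -/

lemma spanSquare_symm {e f : Sym2 V} (h : SpanSquare X e f) : SpanSquare X f e := by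
  obtain ⟨a, b, c, d, h1, h2, h3, h4, h5, h6, h7, h8⟩ := h
  exact ⟨a, c, b, d, h2, h1, h4, h3, Ne.symm h5, h6, h8, h7⟩

lemma transverse_symm {e f : Sym2 V} (h : Transverse X e f) : Transverse X f e := by
  obtain ⟨e', f', h1, h2, h3⟩ := h
  exact ⟨f', e', h2, h1, spanSquare_symm h3⟩

lemma transverse_congr_left {e e₂ f : Sym2 V} (hsh : SameHyp X e e₂) (h : Transverse X e f) :
    Transverse X e₂ f := by
  obtain ⟨e', f', h1, h2, h3⟩ := h
  exact ⟨e', f', sh_trans (sh_symm hsh) h1, h2, h3⟩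

lemma transverse_congr_right {e f f₂ : Sym2 V} (hsh : SameHyp X f f₂) (h : Transverse X e f) :
    Transverse X e f₂ := by
  obtain ⟨e', f', h1, h2, h3⟩ := h
  exact ⟨e', f', h1, sh_trans (sh_symm hsh) h2, h3⟩

lemma incarrier_congr {e e₂ : Sym2 V} {v : V} (hsh : SameHyp X e e₂) (h : InCarrier X e v) :
    InCarrier X e₂ v := by
  obtain ⟨f, h1, h2, h3⟩ := h
  exact ⟨f, sh_trans (sh_symm hsh) h1, h2, h3⟩

lemma tangent_congr_left {e e₂ f : Sym2 V} (hsh : SameHyp X e e₂) (h : Tangent X e f) :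
    Tangent X e₂ f := by
  obtain ⟨h1, h2, v, h3, h4⟩ := h
  refine ⟨fun hh => h1 (sh_trans hsh hh), fun hh => h2 (transverse_congr_left (sh_symm hsh) hh),
    v, incarrier_congr hsh h3, h4⟩

lemma tangent_congr_right {e f f₂ : Sym2 V} (hsh : SameHyp X f f₂) (h : Tangent X e f) :
    Tangent X e f₂ := by
  obtain ⟨h1, h2, v, h3, h4⟩ := h
  refine ⟨fun hh => h1 (sh_trans hh (sh_symm hsh)), fun hh => h2 (transverse_congr_right (sh_symm hsh) hh),
    v, h3, incarrier_congr hsh h4⟩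

lemma edge_in_carrier {e : Sym2 V} {v : V} (he : e ∈ X.edgeSet) (hv : v ∈ e) :
    InCarrier X e v := ⟨e, sh_refl e, he, hv⟩

/-- trichotomy from non-tangency with touching carriers -/
lemma trichotomy {e f : Sym2 V} (hnt : ¬ Tangent X e f) {v : V}
    (h1 : InCarrier X e v) (h2 : InCarrier X f v) :
    SameHyp X e f ∨ Transverse X e f := by
  by_contra h
  push_neg at h
  exact hnt ⟨h.1, h.2, v, h1, h2⟩

section action

variable {G : Type*} [Group G] [MulAction G V]

lemma map_edge_mem (hact : ∀ (g : G) (a b : V), X.Adj a b ↔ X.Adj (g • a) (g • b))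
    {e : Sym2 V} (he : e ∈ X.edgeSet) (g : G) : Sym2.map (g • ·) e ∈ X.edgeSet := by
  induction e using Sym2.ind with
  | _ x y =>
      rw [Sym2.map_pair_eq]
      exact (SimpleGraph.mem_edgeSet X).2 ((hact g x y).1 ((SimpleGraph.mem_edgeSet X).1 he))

lemma map_inv_map (g : G) (e : Sym2 V) :
    Sym2.map (g⁻¹ • ·) (Sym2.map (g • ·) e) = e := by
  rw [Sym2.map_map]
  have h : ((g⁻¹ • ·) ∘ (g • ·) : V → V) = id := funext fun x => inv_smul_smul g x
  rw [h, Sym2.map_id, id_eq]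

end action

end QMProof

open QMProof SimpleGraph

/-- Let `G` act hyperplane-specially on a quasi-median graph `X`. Along a geodesic crossing
hyperplanes `J₁, …, Jₙ` in order, there is no configuration `i < j` with `Jᵢ` and `Jⱼ` in
the same `G`-orbit and, for each `i < k < j`, some `G`-translate of `J_k` transverse to
`Jⱼ`. -/
theorem no_bad_configuration_along_geodesic
    {V G : Type*} [Group G] [MulAction G V]
    (X : SimpleGraph V) (hqm : QuasiMedian X)
    (hact : ∀ (g : G) (a b : V), X.Adj a b ↔ X.Adj (g • a) (g • b))
    (hfaithful : ∀ g : G, (∀ v : V, g • v = v) → g = 1)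
    (hhs1 : ∀ e ∈ X.edgeSet, ∀ g : G,
      ¬ Transverse X e (Sym2.map (g • ·) e) ∧ ¬ Tangent X e (Sym2.map (g • ·) e))
    (hhs2 : ∀ e ∈ X.edgeSet, ∀ f ∈ X.edgeSet, ∀ g : G,
      Transverse X e f → ¬ Tangent X e (Sym2.map (g • ·) f))
    (x y : V) (p : X.Walk x y) (hgeo : p.length = X.dist x y)
    (i j : ℕ) (hij : i < j) (hj : j < p.edges.length)
    (horbit : ∃ g : G,
      SameHyp X (Sym2.map (g • ·) (p.edges[i]'(lt_trans hij hj))) (p.edges[j]'hj))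
    (hbetween : ∀ (k : ℕ) (hk : k < p.edges.length), i < k → k < j →
      ∃ g : G, Transverse X (Sym2.map (g • ·) (p.edges[k]'hk)) (p.edges[j]'hj)) :
    False := by
  classical
  obtain ⟨g, hg⟩ := horbit
  have hconn := hqm.1
  have hjn : j < p.length := by rw [← p.length_edges]; exact hj
  have hA := walk_edge_eq p
  have hadj : ∀ k : ℕ, k < p.length → X.Adj (p.getVert k) (p.getVert (k + 1)) :=
    fun k hk => p.adj_getVert_succ hk
  have hedge : ∀ k : ℕ, k < p.length → s(p.getVert k, p.getVert (k + 1)) ∈ X.edgeSet :=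
    fun k hk => (SimpleGraph.mem_edgeSet X).2 (hadj k hk)
  have hdist : ∀ k l : ℕ, k ≤ l → l ≤ p.length →
      X.dist (p.getVert k) (p.getVert l) = l - k :=
    fun k l h1 h2 => dist_getVert_eq hconn p hgeo h1 h2
  have hdy : ∀ k : ℕ, k ≤ p.length → X.dist (p.getVert k) y = p.length - k := by
    intro k hk
    have := hdist k p.length hk le_rfl
    rwa [p.getVert_length] at this
  rw [hA i (lt_trans hij hj), hA j hj] at hg
  set EI : Sym2 V := s(p.getVert i, p.getVert (i + 1)) with hEI
  set EJ : Sym2 V := s(p.getVert j, p.getVert (j + 1)) with hEJ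
  -- from hhs1 and the orbit relation
  have hKey1 : ∀ f : Sym2 V, SameHyp X EJ f → ¬ Transverse X EI f ∧ ¬ Tangent X EI f := by
    intro f hf
    have h1 := (hhs1 EI (hedge i (lt_trans hij hjn)) g).1
    have h2 := (hhs1 EI (hedge i (lt_trans hij hjn)) g).2
    have hsh : SameHyp X f (Sym2.map (g • ·) EI) := sh_symm (sh_trans hg hf)
    exact ⟨fun ht => h1 (transverse_congr_right hsh ht),
      fun ht => h2 (tangent_congr_right hsh ht)⟩
  -- from hhs2 and the transversality of translates
  have hKey2 : ∀ k : ℕ, i < k → k < j →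
      ¬ Tangent X EJ s(p.getVert k, p.getVert (k + 1)) := by
    intro k h1 h2
    have hk : k < p.edges.length := lt_trans h2 hj
    obtain ⟨h', hh'⟩ := hbetween k hk h1 h2
    rw [hA k hk, hA j hj] at hh'
    have hmemk' : (Sym2.map (h' • ·) s(p.getVert k, p.getVert (k + 1))) ∈ X.edgeSet :=
      map_edge_mem hact (hedge k (lt_trans h2 hjn)) h'
    have htr : Transverse X EJ (Sym2.map (h' • ·) s(p.getVert k, p.getVert (k + 1))) :=
      transverse_symm hh'
    have hres := hhs2 EJ (hedge j hjn) _ hmemk' h'⁻¹ htr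
    rwa [map_inv_map] at hres
  -- the downward scan
  have scan : ∀ m : ℕ, ∀ t : ℕ, i < t → t ≤ j → t = i + 1 + m →
      ∀ z : V, X.Adj (p.getVert t) z → SameHyp X s(p.getVert t, z) EJ →
        X.dist z y ≤ p.length - t - 1 → False := by
    intro m
    induction m with
    | zero =>
        intro t hit htj htm z hzadj hzsh hzy
        have ht : t = i + 1 := by omega
        subst ht
        -- d (A i) z = 2
        have hd2 : X.dist (p.getVert i) z = 2 := by
          have hle : X.dist (p.getVert i) z ≤ 2 := by
            have l1 := dtri hconn (p.getVert i) (p.getVert (i + 1)) z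
            rw [dadj hconn (hadj i (lt_trans hij hjn)), dadj hconn hzadj] at l1
            omega
          have hge : 2 ≤ X.dist (p.getVert i) z := by
            have l1 := dtri hconn (p.getVert i) z y
            have l2 := hdy i (le_of_lt (lt_trans hij hjn))
            have l3 : i + 2 ≤ p.length := by omega
            omega
          omega
        have hfe : s(p.getVert (i + 1), z) ∈ X.edgeSet := (SimpleGraph.mem_edgeSet X).2 hzadj
        have hcar1 : InCarrier X EI (p.getVert (i + 1)) :=
          edge_in_carrier (hedge i (lt_trans hij hjn)) (Sym2.mem_iff.2 (Or.inr rfl))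
        have hcar2 : InCarrier X s(p.getVert (i + 1), z) (p.getVert (i + 1)) :=
          edge_in_carrier hfe (Sym2.mem_iff.2 (Or.inl rfl))
        have hK := hKey1 s(p.getVert (i + 1), z) (sh_symm hzsh)
        rcases trichotomy hK.2 hcar1 hcar2 with hsh | htr
        · exact no_sameHyp_consec hqm (hadj i (lt_trans hij hjn)) hzadj hd2 hsh
        · exact hK.1 htr
    | succ m ihm =>
        intro t hit htj htm z hzadj hzsh hzy
        have hit2 : i + 1 < t := by omega
        have htn : t < p.length := lt_of_le_of_lt htj hjn
        have ht'n : t - 1 < p.length := by omega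
        have hadjt' : X.Adj (p.getVert (t - 1)) (p.getVert t) := by
          have := hadj (t - 1) ht'n
          rwa [show t - 1 + 1 = t by omega] at this
        -- d (A (t-1)) z = 2
        have hd2 : X.dist (p.getVert (t - 1)) z = 2 := by
          have hle : X.dist (p.getVert (t - 1)) z ≤ 2 := by
            have l1 := dtri hconn (p.getVert (t - 1)) (p.getVert t) z
            rw [dadj hconn hadjt', dadj hconn hzadj] at l1
            omega
          have hge : 2 ≤ X.dist (p.getVert (t - 1)) z := by
            have l1 := dtri hconn (p.getVert (t - 1)) z y
            have l2 := hdy (t - 1) (by omega)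
            have l3 : t + 1 ≤ p.length := by omega
            omega
          omega
        have hfe : s(p.getVert t, z) ∈ X.edgeSet := (SimpleGraph.mem_edgeSet X).2 hzadj
        have het' : s(p.getVert (t - 1), p.getVert t) ∈ X.edgeSet :=
          (SimpleGraph.mem_edgeSet X).2 hadjt'
        have hnt : ¬ Tangent X s(p.getVert t, z) s(p.getVert (t - 1), p.getVert t) := by
          intro ht
          have h2 := hKey2 (t - 1) (by omega) (by omega)
          rw [show t - 1 + 1 = t by omega] at h2
          exact h2 (tangent_congr_left hzsh ht)
        have hcar1 : InCarrier X s(p.getVert t, z) (p.getVert t) :=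
          edge_in_carrier hfe (Sym2.mem_iff.2 (Or.inl rfl))
        have hcar2 : InCarrier X s(p.getVert (t - 1), p.getVert t) (p.getVert t) :=
          edge_in_carrier het' (Sym2.mem_iff.2 (Or.inr rfl))
        have hnosame : ¬ SameHyp X s(p.getVert (t - 1), p.getVert t) s(p.getVert t, z) :=
          fun hsh => no_sameHyp_consec hqm hadjt' hzadj hd2 hsh
        rcases trichotomy hnt hcar1 hcar2 with hsh | htr
        · exact hnosame (sh_symm hsh)
        · obtain ⟨z', huz', hwz', hsh1, hsh2⟩ :=
            exists_swap hqm hadjt' hzadj hnosame (transverse_symm htr) hd2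
          have hzy' : X.dist z' y ≤ p.length - (t - 1) - 1 := by
            have l1 := dnbr hconn hwz'.symm y
            omega
          exact ihm (t - 1) (by omega) (by omega) (by omega) z' huz'
            (sh_trans hsh1 hzsh) hzy'
  -- initialise the scan at t = j with z = p.getVert (j+1)
  have hjy : X.dist (p.getVert (j + 1)) y ≤ p.length - j - 1 := by
    have := hdy (j + 1) (by omega)
    omega
  exact scan (j - i - 1) j hij le_rfl (by omega) (p.getVert (j + 1)) (hadj j hjn)
    (sh_refl _) hjy
end

section
/- Let G be a group acting specially on a quasi-median graph X with finitely many orbits of vertices. Then for every hyperplane J of X, the group 𝔖(J) (the image of stab(J) in the permutation group of the set 𝒮(J) of sectors delimited by J) acts on 𝒮(J) with finitely many orbits; consequently, since this action is free, for any clique C ⊆ J the image of stab(C) in 𝔖(J) has finite index in 𝔖(J). -/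
open QM

namespace QMAux


open SimpleGraph

variable {V : Type*} {X : SimpleGraph V}

/-- `c` is the gate of `x` in the clique `C`. -/
def IsGate (X : SimpleGraph V) (C : Set V) (x c : V) : Prop :=
  c ∈ C ∧ ∀ c' ∈ C, c' ≠ c → X.dist x c' = X.dist x c + 1

lemma exists_adj_dist (hconn : X.Connected) {x u : V} {m : ℕ}
    (h : X.dist x u = m + 1) : ∃ u', X.Adj u u' ∧ X.dist x u' = m := by
  obtain ⟨p, hp⟩ := (hconn u x).exists_walk_length_eq_dist
  rw [SimpleGraph.dist_comm] at h
  rw [h] at hp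
  cases p with
  | nil => simp at hp
  | @cons _ b _ hadj q =>
      refine ⟨b, hadj, ?_⟩
      have h1 : X.dist b x ≤ m := by
        have hq := SimpleGraph.dist_le q
        have hlen : (Walk.cons hadj q).length = q.length + 1 := Walk.length_cons _ _
        omega
      have h2 : X.dist x u ≤ X.dist x b + X.dist b u := hconn.dist_triangle
      have h3 : X.dist b u = 1 := dist_eq_one_iff_adj.mpr hadj.symm
      rw [SimpleGraph.dist_comm (u := x) (v := u)] at h2
      rw [SimpleGraph.dist_comm (u := b) (v := x)] at h1
      omega

lemma gate_exists_s14 (hconn : X.Connected) (htri : ∀ a x y : V, X.Adj x y → X.dist a x = X.dist a y →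
      ∃ z : V, X.Adj x z ∧ X.Adj y z ∧ X.dist a z + 1 = X.dist a x)
    (hK4 : ¬ ∃ a b c d : V, X.Adj a b ∧ X.Adj a c ∧ X.Adj a d ∧ X.Adj b c ∧ X.Adj b d ∧
      ¬ X.Adj c d ∧ c ≠ d)
    {C : Set V} (hC : X.IsClique C)
    (hCmax : ∀ E : Set V, X.IsClique E → C ⊆ E → E = C)
    (hne : C.Nonempty) (x : V) : ∃ c, IsGate X C x c := by
  classical
  have hd : ((X.dist x) '' C).Nonempty := hne.image _
  set m := sInf ((X.dist x) '' C) with hm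
  obtain ⟨c, hcC, hcd⟩ := Nat.sInf_mem hd
  refine ⟨c, hcC, ?_⟩
  intro c' hc' hne'
  have hle : m ≤ X.dist x c' := Nat.sInf_le ⟨c', hc', rfl⟩
  have hadj : X.Adj c c' := hC hcC hc' (fun h => hne' h.symm)
  have hub : X.dist x c' ≤ m + 1 := by
    have := hconn.dist_triangle (u := x) (v := c) (w := c')
    have h1 : X.dist c c' = 1 := dist_eq_one_iff_adj.mpr hadj
    omega
  rw [hcd]
  rcases Nat.lt_or_ge (X.dist x c') (m+1) with hlt | hge
  · exfalso
    have heq : X.dist x c' = m := by omega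
    obtain ⟨z, hz1, hz2, hz3⟩ := htri x c c' hadj (by rw [hcd, heq])
    rw [hcd] at hz3
    -- z is not in C
    have hzC : ∀ b ∈ C, z ≠ b := by
      intro b hb hzb
      have : m ≤ X.dist x b := Nat.sInf_le ⟨b, hb, rfl⟩
      rw [← hzb] at this
      omega
    -- z is adjacent to every element of C
    have hzadj : ∀ b ∈ C, X.Adj z b := by
      intro b hb
      by_cases hbc : b = c
      · rw [hbc]; exact hz1.symm
      by_cases hbc' : b = c'
      · rw [hbc']; exact hz2.symm
      by_contra hnadj
      exact hK4 ⟨c, c', z, b, hadj, hz1, hC hcC hb (Ne.symm hbc), hz2,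
        hC hc' hb (Ne.symm hbc'), fun h => hnadj h, hzC b hb⟩
    have hclique : X.IsClique (insert z C) := by
      intro p hp q hq hpq
      rcases hp with rfl | hp
      · rcases hq with rfl | hq
        · exact absurd rfl hpq
        · exact hzadj q hq
      · rcases hq with rfl | hq
        · exact (hzadj p hp).symm
        · exact hC hp hq hpq
    have := hCmax (insert z C) hclique (Set.subset_insert _ _)
    have hzmem : z ∈ C := this ▸ Set.mem_insert z C
    exact hzC z hzmem rfl
  · omega

variable {C : Set V} {γ : V → V}

section GateProps

variable (hγ : ∀ x, IsGate X C x (γ x))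

include hγ

lemma gate_mem (x : V) : γ x ∈ C := (hγ x).1

lemma gate_self {c : V} (hc : c ∈ C) : γ c = c := by
  by_contra h
  have := (hγ c).2 c hc (fun hh => h hh.symm)
  rw [SimpleGraph.dist_self] at this; omega

lemma level_le {x c : V} (hc : c ∈ C) : X.dist x (γ x) ≤ X.dist x c := by
  by_cases h : c = γ x
  · rw [h]
  · rw [(hγ x).2 c hc h]; omega

lemma gate_char {x c : V} (hc : c ∈ C) (h : X.dist x c ≤ X.dist x (γ x)) : γ x = c := by
  by_contra hne
  have := (hγ x).2 c hc (fun hh => hne hh.symm)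
  omega

lemma level_adj (hconn : X.Connected) {x y : V} (h : X.Adj x y) :
    X.dist x (γ x) ≤ X.dist y (γ y) + 1 := by
  have h1 : X.dist x (γ x) ≤ X.dist x (γ y) := level_le hγ (gate_mem hγ y)
  have h2 : X.dist x (γ y) ≤ X.dist x y + X.dist y (γ y) := hconn.dist_triangle
  have h3 : X.dist x y = 1 := dist_eq_one_iff_adj.mpr h
  omega

lemma gate_vertical (hconn : X.Connected) {x y : V} (h : X.Adj x y)
    (hl : X.dist y (γ y) = X.dist x (γ x) + 1) : γ y = γ x := by
  apply gate_char hγ (gate_mem hγ x)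
  have h2 : X.dist y (γ x) ≤ X.dist y x + X.dist x (γ x) := hconn.dist_triangle
  have h3 : X.dist y x = 1 := dist_eq_one_iff_adj.mpr h.symm
  omega

lemma level_eq_of_gate_ne (hconn : X.Connected) {x y : V} (h : X.Adj x y)
    (hne : γ x ≠ γ y) : X.dist x (γ x) = X.dist y (γ y) := by
  have h1 := level_adj hγ hconn h
  have h2 := level_adj hγ hconn h.symm
  rcases Nat.lt_or_ge (X.dist x (γ x)) (X.dist y (γ y)) with hlt | hge
  · have : X.dist y (γ y) = X.dist x (γ x) + 1 := by omega
    exact absurd (gate_vertical hγ hconn h this) (fun hh => hne hh.symm)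
  · rcases Nat.eq_or_lt_of_le hge with heq | hlt'
    · omega
    · have : X.dist x (γ x) = X.dist y (γ y) + 1 := by omega
      exact absurd (gate_vertical hγ hconn h.symm this) hne

end GateProps


section Core

variable (hconn : X.Connected)
variable (htri : ∀ a x y : V, X.Adj x y → X.dist a x = X.dist a y →
      ∃ z : V, X.Adj x z ∧ X.Adj y z ∧ X.dist a z + 1 = X.dist a x)
variable (hqc : ∀ a x y z : V, X.Adj x z → X.Adj y z → x ≠ y →
      X.dist a x = X.dist a y → X.dist a x + 1 = X.dist a z →
      ∃ w : V, X.Adj x w ∧ X.Adj y w ∧ X.dist a w + 2 = X.dist a z)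
variable (hK4 : ¬ ∃ a b c d : V, X.Adj a b ∧ X.Adj a c ∧ X.Adj a d ∧ X.Adj b c ∧ X.Adj b d ∧
      ¬ X.Adj c d ∧ c ≠ d)
variable (hK32 : ¬ ∃ a b c d e : V, a ≠ b ∧ b ≠ c ∧ a ≠ c ∧ d ≠ e ∧
      ¬ X.Adj a b ∧ ¬ X.Adj b c ∧ ¬ X.Adj a c ∧ ¬ X.Adj d e ∧
      X.Adj a d ∧ X.Adj a e ∧ X.Adj b d ∧ X.Adj b e ∧ X.Adj c d ∧ X.Adj c e)
variable {C : Set V} {γ : V → V} (hγ : ∀ x, IsGate X C x (γ x))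

include hconn hγ

lemma tri_ne_snd (htri' : ∀ a x y : V, X.Adj x y → X.dist a x = X.dist a y →
      ∃ z : V, X.Adj x z ∧ X.Adj y z ∧ X.dist a z + 1 = X.dist a x)
    (hK4' : ¬ ∃ a b c d : V, X.Adj a b ∧ X.Adj a c ∧ X.Adj a d ∧ X.Adj b c ∧ X.Adj b d ∧
      ¬ X.Adj c d ∧ c ≠ d)
    {x y z : V} (hxy : X.Adj x y) (hyz : X.Adj y z) (hxz : X.Adj x z)
    (hne : γ x ≠ γ y) : γ z ≠ γ y := by
  have hlxy : X.dist x (γ x) = X.dist y (γ y) := level_eq_of_gate_ne hγ hconn hxy hne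
  have e1 : X.dist z (γ z) ≤ X.dist x (γ x) + 1 := level_adj hγ hconn (X.adj_symm hxz)
  have e2 : X.dist x (γ x) ≤ X.dist z (γ z) + 1 := level_adj hγ hconn hxz
  rcases (by omega : X.dist z (γ z) + 1 = X.dist x (γ x) ∨
      X.dist z (γ z) = X.dist x (γ x) ∨ X.dist z (γ z) = X.dist x (γ x) + 1) with h | h | h
  · exfalso
    have g1 : γ x = γ z := gate_vertical hγ hconn (X.adj_symm hxz) (by omega)
    have g2 : γ y = γ z := gate_vertical hγ hconn (X.adj_symm hyz) (by omega)
    exact hne (g1.trans g2.symm)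
  · intro heq
    -- γ z = γ y, all at level m
    obtain ⟨t, hyt, hzt, ht⟩ := htri' (γ y) y z hyz (by
      rw [SimpleGraph.dist_comm (u := γ y) (v := y), SimpleGraph.dist_comm (u := γ y) (v := z)]
      have hzz : X.dist z (γ y) = X.dist z (γ z) := by rw [heq]
      omega)
    rw [SimpleGraph.dist_comm (u := γ y) (v := t)] at ht
    rw [SimpleGraph.dist_comm (u := γ y) (v := y)] at ht
    have hlt1 : X.dist t (γ t) ≤ X.dist t (γ y) := level_le hγ (gate_mem hγ y)
    have hlt2 : X.dist y (γ y) ≤ X.dist t (γ t) + 1 := level_adj hγ hconn hyt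
    have hgt : γ t = γ y := gate_char hγ (gate_mem hγ y) (by omega)
    have hnxt : ¬ X.Adj x t := by
      intro hxt
      have : γ x = γ t := gate_vertical hγ hconn (X.adj_symm hxt) (by omega)
      exact hne (this.trans (hgt.trans heq.symm) |>.trans heq)
    have hxtne : x ≠ t := by
      intro hh; rw [hh] at hlxy; omega
    exact hK4' ⟨y, z, x, t, hyz, X.adj_symm hxy, hyt, X.adj_symm hxz, hzt, hnxt, hxtne⟩
  · exfalso
    have g1 : γ z = γ x := gate_vertical hγ hconn hxz h
    have g2 : γ z = γ y := gate_vertical hγ hconn hyz (by omega)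
    exact hne (g1.symm.trans g2)

include htri hK4 in
lemma tri_gates {x y z : V} (hxy : X.Adj x y) (hyz : X.Adj y z) (hxz : X.Adj x z)
    (hne : γ x ≠ γ y) : γ z ≠ γ x ∧ γ z ≠ γ y :=
  ⟨tri_ne_snd hconn hγ htri hK4 (X.adj_symm hxy) hxz hyz (Ne.symm hne),
   tri_ne_snd hconn hγ htri hK4 hxy hyz hxz hne⟩

include htri hqc hK4 hK32 in
lemma config1 {a b c d : V} (hab : X.Adj a b) (hbc : X.Adj b c) (hcd : X.Adj c d)
    (hda : X.Adj d a) (hac : a ≠ c) (hbd : b ≠ d)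
    (hgab : γ a ≠ γ b) (hgc : γ c = γ a) (hgd : γ d = γ a)
    (hlc : X.dist c (γ c) = X.dist a (γ a)) (hld : X.dist d (γ d) + 1 = X.dist a (γ a)) :
    False := by
  have hlb : X.dist a (γ a) = X.dist b (γ b) := level_eq_of_gate_ne hγ hconn hab hgab
  have d1 : X.dist a (γ b) = X.dist a (γ a) + 1 := (hγ a).2 (γ b) (gate_mem hγ b) (Ne.symm hgab)
  have d2 : X.dist c (γ b) = X.dist a (γ a) + 1 := by
    have := (hγ c).2 (γ b) (gate_mem hγ b) (by rw [hgc]; exact Ne.symm hgab)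
    omega
  have d3 : X.dist d (γ b) = X.dist a (γ a) := by
    have := (hγ d).2 (γ b) (gate_mem hγ b) (by rw [hgd]; exact Ne.symm hgab)
    omega
  obtain ⟨u, hbu, hdu, hu⟩ := hqc (γ b) b d a (X.adj_symm hab) hda hbd
    (by rw [SimpleGraph.dist_comm (u := γ b) (v := b), SimpleGraph.dist_comm (u := γ b) (v := d)]
        omega)
    (by rw [SimpleGraph.dist_comm (u := γ b) (v := b), SimpleGraph.dist_comm (u := γ b) (v := a)]
        omega)
  rw [SimpleGraph.dist_comm (u := γ b) (v := u), SimpleGraph.dist_comm (u := γ b) (v := a)] at hu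
  have hu' : X.dist u (γ b) + 1 = X.dist a (γ a) := by omega
  have hlu1 : X.dist u (γ u) ≤ X.dist u (γ b) := level_le hγ (gate_mem hγ b)
  have hlu2 : X.dist b (γ b) ≤ X.dist u (γ u) + 1 := level_adj hγ hconn hbu
  have hgu : γ u = γ b := gate_char hγ (gate_mem hγ b) (by omega)
  have hlu : X.dist u (γ u) + 1 = X.dist a (γ a) := by omega
  have hnac : ¬ X.Adj a c := by
    intro h
    exact (tri_gates hconn htri hK4 hγ hab hbc h hgab).1 hgc
  have hncu : ¬ X.Adj c u := by
    intro h
    have : γ c = γ u := gate_vertical hγ hconn (X.adj_symm h) (by omega)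
    rw [hgc, hgu] at this; exact hgab this
  have hnau : ¬ X.Adj a u := by
    intro h
    have : γ a = γ u := gate_vertical hγ hconn (X.adj_symm h) (by omega)
    rw [hgu] at this; exact hgab this
  have hnbd : ¬ X.Adj b d := by
    intro h
    have : γ b = γ d := gate_vertical hγ hconn (X.adj_symm h) (by omega)
    rw [hgd] at this; exact hgab this.symm
  have hcu : c ≠ u := by intro h; rw [h] at hlc; omega
  have hau : a ≠ u := by intro h; rw [h] at hlu; omega
  exact hK32 ⟨a, c, u, b, d, hac, hcu, hau, hbd, hnac, hncu, hnau, hnbd,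
    hab, X.adj_symm hda, X.adj_symm hbc, hcd, X.adj_symm hbu, X.adj_symm hdu⟩

include htri hqc hK4 hK32 in
lemma config2 {a b c d : V} (hab : X.Adj a b) (hbc : X.Adj b c) (hcd : X.Adj c d)
    (hda : X.Adj d a) (hac : a ≠ c) (hbd : b ≠ d)
    (hgab : γ a ≠ γ b) (hgc : γ c = γ a) (hgd : γ d = γ a)
    (hlc : X.dist c (γ c) = X.dist a (γ a)) (hld : X.dist d (γ d) = X.dist a (γ a) + 1) :
    False := by
  have hlb : X.dist a (γ a) = X.dist b (γ b) := level_eq_of_gate_ne hγ hconn hab hgab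
  have d1 : X.dist b (γ a) = X.dist a (γ a) + 1 := by
    have := (hγ b).2 (γ a) (gate_mem hγ a) hgab
    omega
  have d2 : X.dist c (γ a) = X.dist a (γ a) := by have h2 := hlc; rw [hgc] at h2; exact h2
  have d3 : X.dist d (γ a) = X.dist a (γ a) + 1 := by have h3 := hld; rw [hgd] at h3; exact h3
  have d0 : X.dist a (γ a) = X.dist a (γ a) := rfl
  obtain ⟨v, hav, hcv, hv⟩ := hqc (γ a) a c b hab (X.adj_symm hbc) hac
    (by rw [SimpleGraph.dist_comm (u := γ a) (v := a), SimpleGraph.dist_comm (u := γ a) (v := c)]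
        omega)
    (by rw [SimpleGraph.dist_comm (u := γ a) (v := a), SimpleGraph.dist_comm (u := γ a) (v := b)]
        omega)
  rw [SimpleGraph.dist_comm (u := γ a) (v := v), SimpleGraph.dist_comm (u := γ a) (v := b)] at hv
  have hv' : X.dist v (γ a) + 1 = X.dist a (γ a) := by omega
  have hlv1 : X.dist v (γ v) ≤ X.dist v (γ a) := level_le hγ (gate_mem hγ a)
  have hlv2 : X.dist a (γ a) ≤ X.dist v (γ v) + 1 := level_adj hγ hconn hav
  have hgv : γ v = γ a := gate_char hγ (gate_mem hγ a) (by omega)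
  have hlv : X.dist v (γ v) + 1 = X.dist a (γ a) := by omega
  have hnbv : ¬ X.Adj b v := by
    intro h
    have : γ b = γ v := gate_vertical hγ hconn (X.adj_symm h) (by omega)
    rw [hgv] at this; exact hgab this.symm
  have hnvd : ¬ X.Adj v d := by
    intro h
    have := level_adj hγ hconn (X.adj_symm h)
    omega
  have hnbd : ¬ X.Adj b d := by
    intro h
    have : γ d = γ b := gate_vertical hγ hconn h (by omega)
    rw [hgd] at this; exact hgab this
  have hnac : ¬ X.Adj a c := by
    intro h
    exact (tri_gates hconn htri hK4 hγ hab hbc h hgab).1 hgc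
  have hbv : b ≠ v := by intro h; rw [h] at d1; omega
  have hvd : v ≠ d := by intro h; rw [← h] at hld; omega
  exact hK32 ⟨b, v, d, a, c, hbv, hvd, hbd, hac, hnbv, hnvd, hnbd, hnac,
    X.adj_symm hab, hbc, X.adj_symm hav, X.adj_symm hcv, hda, X.adj_symm hcd⟩

include htri hqc hK4 hK32 in
lemma config3 {a b c d : V} (hab : X.Adj a b) (hbc : X.Adj b c) (hcd : X.Adj c d)
    (hda : X.Adj d a) (hac : a ≠ c) (hbd : b ≠ d)
    (hgab : γ a ≠ γ b) (hgc : γ c = γ a) (hgd : γ d = γ a)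
    (hlc : X.dist c (γ c) = X.dist a (γ a)) (hld : X.dist d (γ d) = X.dist a (γ a)) :
    False := by
  have hlb : X.dist a (γ a) = X.dist b (γ b) := level_eq_of_gate_ne hγ hconn hab hgab
  have d1 : X.dist b (γ a) = X.dist a (γ a) + 1 := by
    have := (hγ b).2 (γ a) (gate_mem hγ a) hgab
    omega
  have d2 : X.dist c (γ a) = X.dist a (γ a) := by have h2 := hlc; rw [hgc] at h2; exact h2
  obtain ⟨u, hau, hcu, hu⟩ := hqc (γ a) a c b hab (X.adj_symm hbc) hac
    (by rw [SimpleGraph.dist_comm (u := γ a) (v := a), SimpleGraph.dist_comm (u := γ a) (v := c)]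
        omega)
    (by rw [SimpleGraph.dist_comm (u := γ a) (v := a), SimpleGraph.dist_comm (u := γ a) (v := b)]
        omega)
  rw [SimpleGraph.dist_comm (u := γ a) (v := u), SimpleGraph.dist_comm (u := γ a) (v := b)] at hu
  have hu' : X.dist u (γ a) + 1 = X.dist a (γ a) := by omega
  have hlu1 : X.dist u (γ u) ≤ X.dist u (γ a) := level_le hγ (gate_mem hγ a)
  have hlu2 : X.dist a (γ a) ≤ X.dist u (γ u) + 1 := level_adj hγ hconn hau
  have hgu : γ u = γ a := gate_char hγ (gate_mem hγ a) (by omega)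
  have hlu : X.dist u (γ u) + 1 = X.dist a (γ a) := by omega
  have hbu : b ≠ u := by intro h; rw [h] at hlb; omega
  exact config1 hconn htri hqc hK4 hK32 hγ hab hbc hcu (X.adj_symm hau) hac hbu hgab hgc hgu
    hlc hlu

include htri hqc hK4 hK32 in
lemma square_good {a b c d : V} (hab : X.Adj a b) (hbc : X.Adj b c) (hcd : X.Adj c d)
    (hda : X.Adj d a) (hac : a ≠ c) (hbd : b ≠ d)
    (hgab : γ a ≠ γ b) : γ d ≠ γ c := by
  intro heq
  have hlb : X.dist a (γ a) = X.dist b (γ b) := level_eq_of_gate_ne hγ hconn hab hgab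
  have ep1 : X.dist d (γ d) ≤ X.dist a (γ a) + 1 := level_adj hγ hconn hda
  have ep2 : X.dist a (γ a) ≤ X.dist d (γ d) + 1 := level_adj hγ hconn (X.adj_symm hda)
  have eq1 : X.dist c (γ c) ≤ X.dist b (γ b) + 1 := level_adj hγ hconn (X.adj_symm hbc)
  have eq2 : X.dist b (γ b) ≤ X.dist c (γ c) + 1 := level_adj hγ hconn hbc
  have eqp1 : X.dist c (γ c) ≤ X.dist d (γ d) + 1 := level_adj hγ hconn hcd
  have eqp2 : X.dist d (γ d) ≤ X.dist c (γ c) + 1 := level_adj hγ hconn (X.adj_symm hcd)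
  rcases (by omega : X.dist d (γ d) + 1 = X.dist a (γ a) ∨
      X.dist d (γ d) = X.dist a (γ a) ∨ X.dist d (γ d) = X.dist a (γ a) + 1) with hp | hp | hp
  · -- d one level below
    have hgd : γ a = γ d := gate_vertical hγ hconn hda (by omega)
    have hgc : γ c = γ a := by rw [← heq, hgd]
    rcases (by omega : X.dist c (γ c) + 1 = X.dist a (γ a) ∨
        X.dist c (γ c) = X.dist a (γ a)) with hq | hq
    · have : γ b = γ c := gate_vertical hγ hconn (X.adj_symm hbc) (by omega)
      exact hgab (by rw [this, hgc])
    · exact config1 hconn htri hqc hK4 hK32 hγ hab hbc hcd hda hac hbd hgab hgc hgd.symm hq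
        (by omega)
  · -- d at the same level
    rcases (by omega : X.dist c (γ c) + 1 = X.dist a (γ a) ∨
        X.dist c (γ c) = X.dist a (γ a) ∨ X.dist c (γ c) = X.dist a (γ a) + 1) with hq | hq | hq
    · -- c one level below : relabelled config1 on (b, a, d, c)
      have hgcb : γ b = γ c := gate_vertical hγ hconn (X.adj_symm hbc) (by omega)
      have hgdb : γ d = γ b := by rw [heq, hgcb]
      exact config1 hconn htri hqc hK4 hK32 hγ (X.adj_symm hab) (X.adj_symm hda)
        (X.adj_symm hcd) (X.adj_symm hbc) hbd hac (Ne.symm hgab) hgdb (hgcb.symm)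
        (by omega) (by omega)
    · -- all at the same level
      by_cases hga : γ c = γ a
      · exact config3 hconn htri hqc hK4 hK32 hγ hab hbc hcd hda hac hbd hgab hga
          (heq ▸ hga) hq (by omega)
      · by_cases hgb : γ c = γ b
        · exact config3 hconn htri hqc hK4 hK32 hγ (X.adj_symm hab) (X.adj_symm hda)
            (X.adj_symm hcd) (X.adj_symm hbc) hbd hac (Ne.symm hgab)
            (by rw [heq, hgb]) hgb (by omega) (by omega)
        · -- γ c is a third gate
          have d1 : X.dist a (γ c) = X.dist a (γ a) + 1 :=
            (hγ a).2 (γ c) (gate_mem hγ c) hga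
          have d2 : X.dist b (γ c) = X.dist a (γ a) + 1 := by
            have := (hγ b).2 (γ c) (gate_mem hγ b |> fun _ => gate_mem hγ c) hgb
            omega
          have d3 : X.dist d (γ c) = X.dist a (γ a) := by rw [← heq]; omega
          obtain ⟨z, haz, hbz, hz⟩ := htri (γ c) a b hab
            (by rw [SimpleGraph.dist_comm (u := γ c) (v := a),
                SimpleGraph.dist_comm (u := γ c) (v := b)]; omega)
          rw [SimpleGraph.dist_comm (u := γ c) (v := z),
            SimpleGraph.dist_comm (u := γ c) (v := a)] at hz
          have hz' : X.dist z (γ c) = X.dist a (γ a) := by omega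
          have hlz1 : X.dist z (γ z) ≤ X.dist z (γ c) := level_le hγ (gate_mem hγ c)
          have hlz2 : X.dist a (γ a) ≤ X.dist z (γ z) + 1 := level_adj hγ hconn haz
          rcases (by omega : X.dist z (γ z) + 1 = X.dist a (γ a) ∨
              X.dist z (γ z) = X.dist a (γ a)) with hlz | hlz
          · have g1 : γ a = γ z := gate_vertical hγ hconn (X.adj_symm haz) (by omega)
            have g2 : γ b = γ z := gate_vertical hγ hconn (X.adj_symm hbz) (by omega)
            exact hgab (g1.trans g2.symm)
          · have hgz : γ z = γ c := gate_char hγ (gate_mem hγ c) (by omega)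
            by_cases hzd : z = d
            · -- triangle b c d
              subst hzd
              exact (tri_gates hconn htri hK4 hγ hbc hcd hbz
                (fun hh => hgb hh.symm)).2 hgz
            · obtain ⟨w, hzw, hdw, hw⟩ := hqc (γ c) z d a (X.adj_symm haz) hda hzd
                (by rw [SimpleGraph.dist_comm (u := γ c) (v := z),
                    SimpleGraph.dist_comm (u := γ c) (v := d)]; omega)
                (by rw [SimpleGraph.dist_comm (u := γ c) (v := z),
                    SimpleGraph.dist_comm (u := γ c) (v := a)]; omega)
              rw [SimpleGraph.dist_comm (u := γ c) (v := w),
                SimpleGraph.dist_comm (u := γ c) (v := a)] at hw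
              have hw' : X.dist w (γ c) + 1 = X.dist a (γ a) := by omega
              have hlw1 : X.dist w (γ w) ≤ X.dist w (γ c) := level_le hγ (gate_mem hγ c)
              have hlw2 : X.dist d (γ d) ≤ X.dist w (γ w) + 1 := level_adj hγ hconn hdw
              have hgw : γ w = γ c := gate_char hγ (gate_mem hγ c) (by omega)
              have hlw : X.dist w (γ w) + 1 = X.dist a (γ a) := by omega
              have haw : a ≠ w := by intro h; rw [← h] at hw'; omega
              have hgzd : γ z = γ d := by rw [hgz, heq]
              have hgwd : γ w = γ d := by rw [hgw, heq]
              have hzl : X.dist z (γ z) = X.dist d (γ d) := by rw [hgz]; omega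
              have hwl : X.dist w (γ w) + 1 = X.dist d (γ d) := by omega
              exact config1 hconn htri hqc hK4 hK32 hγ hda haz hzw (X.adj_symm hdw)
                (Ne.symm hzd) haw (by intro hh; rw [heq] at hh; exact hga hh)
                hgzd hgwd hzl hwl
    · -- c one level above
      have hgcb : γ c = γ b := gate_vertical hγ hconn hbc (by omega)
      have hgdb : γ d = γ b := by rw [heq, hgcb]
      exact config2 hconn htri hqc hK4 hK32 hγ (X.adj_symm hab) (X.adj_symm hda)
        (X.adj_symm hcd) (X.adj_symm hbc) hbd hac (Ne.symm hgab) hgdb hgcb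
        (by omega) (by omega)
  · -- d one level above
    have hgd : γ d = γ a := gate_vertical hγ hconn (X.adj_symm hda) hp
    have hgc : γ c = γ a := by rw [← heq, hgd]
    rcases (by omega : X.dist c (γ c) = X.dist a (γ a) ∨
        X.dist c (γ c) = X.dist a (γ a) + 1) with hq | hq
    · exact config2 hconn htri hqc hK4 hK32 hγ hab hbc hcd hda hac hbd hgab hgc hgd hq
        (by omega)
    · have : γ c = γ b := gate_vertical hγ hconn hbc (by omega)
      exact hgab (by rw [← this, hgc])

omit hconn hγ in
lemma good_pair {u v : V} (hadj : X.Adj u v) :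
    (∃ x y, s(u,v) = s(x,y) ∧ X.Adj x y ∧ γ x ≠ γ y) ↔ γ u ≠ γ v := by
  constructor
  · rintro ⟨x, y, hxy, hadj', hne⟩
    rcases Sym2.eq_iff.mp hxy with ⟨h1, h2⟩ | ⟨h1, h2⟩
    · rw [h1, h2]; exact hne
    · rw [h1, h2]; exact hne.symm
  · exact fun h => ⟨u, v, rfl, hadj, h⟩

include htri hqc hK4 hK32 in
lemma good_iff_of_edgeRel {e f : Sym2 V} (h : QM.EdgeRel X e f) :
    (∃ x y, e = s(x,y) ∧ X.Adj x y ∧ γ x ≠ γ y) ↔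
      (∃ x y, f = s(x,y) ∧ X.Adj x y ∧ γ x ≠ γ y) := by
  rcases h with ⟨a, b, c, hab, hbc, hac, he, hf⟩ |
    ⟨a, b, c, d, hab, hbc, hcd, hda, hacn, hbdn, hef⟩
  · have TA : (γ a ≠ γ b ∨ γ b ≠ γ c ∨ γ a ≠ γ c) →
        (γ a ≠ γ b ∧ γ b ≠ γ c ∧ γ a ≠ γ c) := by
      rintro (h | h | h)
      · obtain ⟨h1, h2⟩ := tri_gates hconn htri hK4 hγ hab hbc hac h
        exact ⟨h, Ne.symm h2, Ne.symm h1⟩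
      · obtain ⟨h1, h2⟩ := tri_gates hconn htri hK4 hγ hbc (X.adj_symm hac) (X.adj_symm hab) h
        exact ⟨h1, h, h2⟩
      · obtain ⟨h1, h2⟩ := tri_gates hconn htri hK4 hγ hac (X.adj_symm hbc) hab h
        exact ⟨Ne.symm h1, h2, h⟩
    simp only [Set.mem_insert_iff, Set.mem_singleton_iff] at he hf
    rcases he with rfl | rfl | rfl <;> rcases hf with rfl | rfl | rfl
    · rfl
    · rw [good_pair (γ := γ) hab, good_pair (γ := γ) hbc]; tauto
    · rw [good_pair (γ := γ) hab, good_pair (γ := γ) hac]; tauto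
    · rw [good_pair (γ := γ) hbc, good_pair (γ := γ) hab]; tauto
    · rfl
    · rw [good_pair (γ := γ) hbc, good_pair (γ := γ) hac]; tauto
    · rw [good_pair (γ := γ) hac, good_pair (γ := γ) hab]; tauto
    · rw [good_pair (γ := γ) hac, good_pair (γ := γ) hbc]; tauto
    · rfl
  · have key : γ a ≠ γ b ↔ γ d ≠ γ c := by
      constructor
      · exact fun h => square_good hconn htri hqc hK4 hK32 hγ hab hbc hcd hda hacn hbdn h
      · intro h
        exact square_good hconn htri hqc hK4 hK32 hγ (X.adj_symm hcd) (X.adj_symm hbc)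
          (X.adj_symm hab) (X.adj_symm hda) (Ne.symm hbdn) (Ne.symm hacn) h
    rcases hef with ⟨rfl, rfl⟩ | ⟨rfl, rfl⟩
    · rw [good_pair (γ := γ) hab, good_pair (γ := γ) (X.adj_symm hcd)]; exact key
    · rw [good_pair (γ := γ) hab, good_pair (γ := γ) (X.adj_symm hcd)]; exact key.symm

include htri hqc hK4 hK32 in
lemma good_iff_of_sameHyp {e f : Sym2 V} (h : QM.SameHyp X e f) :
    (∃ x y, e = s(x,y) ∧ X.Adj x y ∧ γ x ≠ γ y) ↔
      (∃ x y, f = s(x,y) ∧ X.Adj x y ∧ γ x ≠ γ y) := by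
  induction h with
  | rel x y hxy => exact good_iff_of_edgeRel hconn htri hqc hK4 hK32 hγ hxy
  | refl x => exact Iff.rfl
  | symm x y _ ih => exact ih.symm
  | trans x y z _ _ ih1 ih2 => exact ih1.trans ih2

include htri hqc hK4 hK32 in
lemma gate_ne_of_dual {a₀ b₀ : V} (ha₀ : a₀ ∈ C) (hb₀ : b₀ ∈ C) (hne₀ : a₀ ≠ b₀)
    (hadj₀ : X.Adj a₀ b₀) {x y : V} (hxy : X.Adj x y)
    (hdual : QM.SameHyp X s(x,y) s(a₀,b₀)) : γ x ≠ γ y := by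
  have hgood : ∃ u v, s(a₀,b₀) = s(u,v) ∧ X.Adj u v ∧ γ u ≠ γ v :=
    ⟨a₀, b₀, rfl, hadj₀, by rw [gate_self hγ ha₀, gate_self hγ hb₀]; exact hne₀⟩
  obtain ⟨u, v, huv, _, hne⟩ :=
    (good_iff_of_sameHyp hconn htri hqc hK4 hK32 hγ hdual).mpr hgood
  rcases Sym2.eq_iff.mp huv with ⟨h1, h2⟩ | ⟨h1, h2⟩
  · rw [h1, h2]; exact hne
  · rw [h1, h2]; exact hne.symm

end Core

section Equiv

variable {G : Type*} [Group G] [MulAction G V]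
variable (hact : ∀ (g : G) (a b : V), X.Adj a b ↔ X.Adj (g • a) (g • b))

include hact in
lemma edgeRel_smul (g : G) {e f : Sym2 V} (h : QM.EdgeRel X e f) :
    QM.EdgeRel X (Sym2.map (g • ·) e) (Sym2.map (g • ·) f) := by
  rcases h with ⟨a,b,c,hab,hbc,hac,he,hf⟩ | ⟨a,b,c,d,hab,hbc,hcd,hda,hac,hbd,hef⟩
  · left
    refine ⟨g•a, g•b, g•c, (hact g a b).mp hab, (hact g b c).mp hbc, (hact g a c).mp hac, ?_, ?_⟩
    · simp only [Set.mem_insert_iff, Set.mem_singleton_iff] at he ⊢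
      rcases he with rfl | rfl | rfl
      · exact Or.inl (Sym2.map_pair_eq _ _ _)
      · exact Or.inr (Or.inl (Sym2.map_pair_eq _ _ _))
      · exact Or.inr (Or.inr (Sym2.map_pair_eq _ _ _))
    · simp only [Set.mem_insert_iff, Set.mem_singleton_iff] at hf ⊢
      rcases hf with rfl | rfl | rfl
      · exact Or.inl (Sym2.map_pair_eq _ _ _)
      · exact Or.inr (Or.inl (Sym2.map_pair_eq _ _ _))
      · exact Or.inr (Or.inr (Sym2.map_pair_eq _ _ _))
  · right
    refine ⟨g•a, g•b, g•c, g•d, (hact g a b).mp hab, (hact g b c).mp hbc, (hact g c d).mp hcd,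
      (hact g d a).mp hda, fun hh => hac (smul_left_cancel g hh),
      fun hh => hbd (smul_left_cancel g hh), ?_⟩
    rcases hef with ⟨rfl, rfl⟩ | ⟨rfl, rfl⟩
    · exact Or.inl ⟨Sym2.map_pair_eq _ _ _, Sym2.map_pair_eq _ _ _⟩
    · exact Or.inr ⟨Sym2.map_pair_eq _ _ _, Sym2.map_pair_eq _ _ _⟩

include hact in
lemma sameHyp_smul (g : G) {e f : Sym2 V} (h : QM.SameHyp X e f) :
    QM.SameHyp X (Sym2.map (g • ·) e) (Sym2.map (g • ·) f) := by
  induction h with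
  | rel x y hxy => exact Relation.EqvGen.rel _ _ (edgeRel_smul hact g hxy)
  | refl x => exact Relation.EqvGen.refl _
  | symm x y _ ih => exact Relation.EqvGen.symm _ _ ih
  | trans x y z _ _ ih1 ih2 => exact Relation.EqvGen.trans _ _ _ ih1 ih2

lemma map_smul_inv (g : G) (e : Sym2 V) :
    Sym2.map (g⁻¹ • ·) (Sym2.map (g • ·) e) = e := by
  rw [Sym2.map_map]
  have h : ((g⁻¹ • ·) ∘ (g • ·) : V → V) = id := funext fun x => inv_smul_smul g x
  rw [h, Sym2.map_id, id_eq]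

include hact in
lemma sameHyp_smul_iff (g : G) {e f : Sym2 V}
    (h : QM.SameHyp X (Sym2.map (g • ·) e) (Sym2.map (g • ·) f)) : QM.SameHyp X e f := by
  have h2 := sameHyp_smul hact g⁻¹ h
  rwa [map_smul_inv, map_smul_inv] at h2

lemma st_one (e₀ : Sym2 V) : QM.SameHyp X e₀ (Sym2.map (((1:G)) • ·) e₀) := by
  have h : (((1:G)) • · : V → V) = id := funext fun x => one_smul G x
  rw [h, Sym2.map_id, id_eq]
  exact Relation.EqvGen.refl _

include hact in
lemma st_mul {e₀ : Sym2 V} {g h : G} (hg : QM.SameHyp X e₀ (Sym2.map (g • ·) e₀))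
    (hh : QM.SameHyp X e₀ (Sym2.map (h • ·) e₀)) :
    QM.SameHyp X e₀ (Sym2.map ((g * h) • ·) e₀) := by
  have h2 := sameHyp_smul hact g hh
  have h3 : Sym2.map (g • ·) (Sym2.map (h • ·) e₀) = Sym2.map ((g * h) • ·) e₀ := by
    rw [Sym2.map_map]
    congr 1
    funext x
    simp [mul_smul]
  rw [h3] at h2
  exact Relation.EqvGen.trans _ _ _ hg h2

include hact in
lemma st_inv {e₀ : Sym2 V} {g : G} (hg : QM.SameHyp X e₀ (Sym2.map (g • ·) e₀)) :
    QM.SameHyp X e₀ (Sym2.map (g⁻¹ • ·) e₀) := by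
  have h2 := sameHyp_smul hact g⁻¹ hg
  rw [map_smul_inv] at h2
  exact Relation.EqvGen.symm _ _ h2

lemma del_adj_iff {e₀ : Sym2 V} {x y : V} :
    (QM.delGraph X e₀).Adj x y ↔ X.Adj x y ∧ ¬ QM.SameHyp X s(x,y) e₀ := by
  unfold QM.delGraph
  rw [SimpleGraph.fromRel_adj]
  constructor
  · rintro ⟨hne, h | h⟩
    · exact h
    · exact ⟨h.1.symm, fun hh => h.2 (by rwa [Sym2.eq_swap] at hh)⟩
  · intro h
    exact ⟨h.1.ne, Or.inl h⟩

include hact in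
lemma mk_smul_eq {e₀ : Sym2 V} {g : G} (hg : QM.SameHyp X e₀ (Sym2.map (g • ·) e₀)) {x y : V}
    (h : (QM.delGraph X e₀).connectedComponentMk x = (QM.delGraph X e₀).connectedComponentMk y) :
    (QM.delGraph X e₀).connectedComponentMk (g • x) =
      (QM.delGraph X e₀).connectedComponentMk (g • y) := by
  have hreach := SimpleGraph.ConnectedComponent.eq.mp h
  refine SimpleGraph.ConnectedComponent.eq.mpr (hreach.map ⟨fun v => g • v, ?_⟩)
  intro a b hab
  rw [del_adj_iff] at hab
  rw [del_adj_iff]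
  refine ⟨(hact g a b).mp hab.1, fun hh => hab.2 ?_⟩
  rw [← Sym2.map_pair_eq (g • ·) a b] at hh
  exact sameHyp_smul_iff hact g (Relation.EqvGen.trans _ _ _ hh hg)

end Equiv

section Reach

variable {C : Set V} {γ : V → V}

lemma reach_gate (hconn : X.Connected) (hγ : ∀ x, IsGate X C x (γ x)) {e₀ : Sym2 V}
    (hD : ∀ x y : V, X.Adj x y → QM.SameHyp X s(x,y) e₀ → γ x ≠ γ y) :
    ∀ (n : ℕ) (x : V), X.dist x (γ x) = n → (QM.delGraph X e₀).Reachable x (γ x) := by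
  intro n
  induction n with
  | zero =>
      intro x hx
      have hh : x = γ x := (hconn.dist_eq_zero_iff).mp hx
      rw [← hh]
  | succ n ih =>
      intro x hx
      have hx' : X.dist (γ x) x = n + 1 := by rw [SimpleGraph.dist_comm]; exact hx
      obtain ⟨y, hxy, hy⟩ := exists_adj_dist hconn hx'
      rw [SimpleGraph.dist_comm] at hy
      have hyg : γ y = γ x := by
        by_contra hne
        have h1 := (hγ x).2 (γ y) (gate_mem hγ y) hne
        have h2 : X.dist x (γ y) ≤ X.dist x y + X.dist y (γ y) := hconn.dist_triangle
        have h3 : X.dist x y = 1 := SimpleGraph.dist_eq_one_iff_adj.mpr hxy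
        have h4 : X.dist y (γ y) ≤ X.dist y (γ x) := level_le hγ (gate_mem hγ x)
        omega
      have hnd : ¬ QM.SameHyp X s(x,y) e₀ := fun hh => (hD x y hxy hh) (by rw [hyg])
      have hadj : (QM.delGraph X e₀).Adj x y := del_adj_iff.mpr ⟨hxy, hnd⟩
      have hyy : X.dist y (γ y) = n := by rw [hyg]; exact hy
      have hr := ih y hyy
      rw [hyg] at hr
      exact hadj.reachable.trans hr

end Reach

end QMAux



/-- Let `G` act specially on a quasi-median graph `X` with finitely many orbits of vertices.
Then for every hyperplane `J` (represented by an edge `e₀`), the image `𝔖(J)` of `stab(J)`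
in the permutations of the set `𝒮(J)` of sectors acts on `𝒮(J)` with finitely many orbits;
consequently, since this action is free, for any clique `C` dual to `J` the image of
`stab(C)` in `𝔖(J)` has finite index in `𝔖(J)`. -/
theorem sector_action_finitely_many_orbits_and_clique_stabilizer_finite_index
    {V G : Type*} [Group G] [MulAction G V]
    (X : SimpleGraph V) (hqm : QuasiMedian X)
    (hact : ∀ (g : G) (a b : V), X.Adj a b ↔ X.Adj (g • a) (g • b))
    (hfaithful : ∀ g : G, (∀ v : V, g • v = v) → g = 1)
    (hhs1 : ∀ e ∈ X.edgeSet, ∀ g : G,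
      ¬ Transverse X e (Sym2.map (g • ·) e) ∧ ¬ Tangent X e (Sym2.map (g • ·) e))
    (hhs2 : ∀ e ∈ X.edgeSet, ∀ f ∈ X.edgeSet, ∀ g : G,
      Transverse X e f → ¬ Tangent X e (Sym2.map (g • ·) f))
    -- for every hyperplane, `𝔖(J)` acts freely on the set of sectors:
    (hfreeS : ∀ e ∈ X.edgeSet, ∀ g : G, SameHyp X e (Sym2.map (g • ·) e) →
      (∃ v : V, (delGraph X e).connectedComponentMk (g • v) =
        (delGraph X e).connectedComponentMk v) →
      ∀ w : V, (delGraph X e).connectedComponentMk (g • w) =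
        (delGraph X e).connectedComponentMk w)
    -- finitely many orbits of vertices:
    (horb : ∃ T : Finset V, ∀ v : V, ∃ g : G, ∃ t ∈ T, g • t = v)
    -- the hyperplane `J`, represented by an edge `e₀`:
    (e₀ : Sym2 V) (he₀ : e₀ ∈ X.edgeSet)
    -- a clique `C` dual to `J`:
    (C : Set V) (hC : X.IsClique C)
    (hCmax : ∀ E : Set V, X.IsClique E → C ⊆ E → E = C)
    (hCedge : ∃ a ∈ C, ∃ b ∈ C, a ≠ b)
    (hCdual : ∀ a ∈ C, ∀ b ∈ C, a ≠ b → SameHyp X s(a, b) e₀) :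
    -- (1) `𝔖(J)` acts on the sectors with finitely many orbits:
    (∃ T : Set ((delGraph X e₀).ConnectedComponent), T.Finite ∧
      ∀ S : (delGraph X e₀).ConnectedComponent, ∃ S' ∈ T, ∃ g : G,
        SameHyp X e₀ (Sym2.map (g • ·) e₀) ∧
        ∀ v : V, (delGraph X e₀).connectedComponentMk v = S' →
          (delGraph X e₀).connectedComponentMk (g • v) = S) ∧
    -- (2) the image of `stab(C)` in `𝔖(J)` has finite index:
    (∃ F : Set G, F.Finite ∧ (∀ f ∈ F, SameHyp X e₀ (Sym2.map (f • ·) e₀)) ∧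
      ∀ g : G, SameHyp X e₀ (Sym2.map (g • ·) e₀) →
        ∃ h f : G, ((h • ·) '' C = C) ∧ f ∈ F ∧
          ∀ v : V, (delGraph X e₀).connectedComponentMk (g • v) =
            (delGraph X e₀).connectedComponentMk ((h * f) • v)) := by
  classical
  obtain ⟨hconn, hK4, hK32, htri, hqc⟩ := hqm
  obtain ⟨a₀, ha₀, b₀, hb₀, hab₀⟩ := hCedge
  have hCne : C.Nonempty := ⟨a₀, ha₀⟩
  have hex : ∀ x, ∃ c, QMAux.IsGate X C x c := QMAux.gate_exists_s14 hconn htri hK4 hC hCmax hCne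
  choose γ hγ using hex
  have hadj₀ : X.Adj a₀ b₀ := hC ha₀ hb₀ hab₀
  -- Claim D: edges dual to e₀ have distinct gates
  have hD : ∀ x y : V, X.Adj x y → QM.SameHyp X s(x,y) e₀ → γ x ≠ γ y := by
    intro x y hxy hdual
    exact QMAux.gate_ne_of_dual hconn htri hqc hK4 hK32 hγ ha₀ hb₀ hab₀ hadj₀ hxy
      (Relation.EqvGen.trans _ _ _ hdual
        (Relation.EqvGen.symm _ _ (hCdual a₀ ha₀ b₀ hb₀ hab₀)))
  have hreach : ∀ x : V, (QM.delGraph X e₀).Reachable x (γ x) :=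
    fun x => QMAux.reach_gate hconn hγ hD (X.dist x (γ x)) x rfl
  have hmkγ : ∀ x : V, (QM.delGraph X e₀).connectedComponentMk x
      = (QM.delGraph X e₀).connectedComponentMk (γ x) :=
    fun x => SimpleGraph.ConnectedComponent.eq.mpr (hreach x)
  -- every vertex of C is an endpoint of an edge dual to e₀
  have hpartner : ∀ c ∈ C, ∃ u, X.Adj c u ∧ QM.SameHyp X s(c,u) e₀ := by
    intro c hc
    by_cases h : c = a₀
    · exact ⟨b₀, by rw [h]; exact hadj₀, by rw [h]; exact hCdual a₀ ha₀ b₀ hb₀ hab₀⟩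
    · exact ⟨a₀, hC hc ha₀ h, hCdual c hc a₀ ha₀ h⟩
  -- an element carrying a carrier vertex to a carrier vertex stabilizes the hyperplane
  have hstab_of : ∀ (g : G) (v v' : V), (∃ u, X.Adj v u ∧ QM.SameHyp X s(v,u) e₀) →
      (∃ u, X.Adj v' u ∧ QM.SameHyp X s(v',u) e₀) → g • v = v' →
      QM.SameHyp X e₀ (Sym2.map (g • ·) e₀) := by
    rintro g v v' ⟨u, hu1, hu2⟩ ⟨u', hu1', hu2'⟩ hgv
    obtain ⟨hT, hTan⟩ := hhs1 e₀ he₀ g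
    by_contra hS
    apply hTan
    refine ⟨hS, hT, v', ⟨s(v',u'), Relation.EqvGen.symm _ _ hu2', ?_, ?_⟩,
      ⟨s(g•v, g•u), ?_, ?_, ?_⟩⟩
    · exact (SimpleGraph.mem_edgeSet _).mpr hu1'
    · exact Sym2.mem_iff.mpr (Or.inl rfl)
    · have h2 := QMAux.sameHyp_smul hact g (Relation.EqvGen.symm _ _ hu2)
      rwa [Sym2.map_pair_eq] at h2
    · exact (SimpleGraph.mem_edgeSet _).mpr ((hact g v u).mp hu1)
    · rw [← hgv]; exact Sym2.mem_iff.mpr (Or.inl rfl)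
  -- uniqueness of the clique dual to e₀ through a point
  have hCsub : ∀ (δ : G), QM.SameHyp X e₀ (Sym2.map (δ • ·) e₀) → ∀ c0 ∈ C, δ • c0 ∈ C →
      ∀ x ∈ C, δ • x ∈ C := by
    intro δ hδ c0 hc0 hc0' x hx
    by_contra hb
    have hxc0 : x ≠ c0 := by rintro rfl; exact hb hc0'
    have hadjx : X.Adj (δ•c0) (δ•x) := (hact δ c0 x).mp (hC hc0 hx (Ne.symm hxc0))
    have hdualx : QM.SameHyp X s(δ•c0, δ•x) e₀ := by
      have h1 := QMAux.sameHyp_smul hact δ (hCdual c0 hc0 x hx (Ne.symm hxc0))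
      rw [Sym2.map_pair_eq] at h1
      exact Relation.EqvGen.trans _ _ _ h1 (Relation.EqvGen.symm _ _ hδ)
    have hlev : X.dist (δ•x) (δ•c0) = 1 := SimpleGraph.dist_eq_one_iff_adj.mpr hadjx.symm
    have hlb : X.dist (δ•x) (γ (δ•x)) ≤ 1 := by
      have := QMAux.level_le hγ (x := δ • x) hc0'
      omega
    have hne0 : X.dist (δ•x) (γ (δ•x)) ≠ 0 := by
      intro h0
      have h1 : δ•x = γ (δ•x) := hconn.dist_eq_zero_iff.mp h0
      exact hb (h1 ▸ QMAux.gate_mem hγ (δ•x))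
    have hgx : γ (δ•x) = δ•c0 := QMAux.gate_char hγ hc0' (by omega)
    have hgc : γ (δ•c0) = δ•c0 := QMAux.gate_self hγ hc0'
    exact hD (δ•c0) (δ•x) hadjx hdualx (by rw [hgx, hgc])
  have hCimg : ∀ (δ : G), QM.SameHyp X e₀ (Sym2.map (δ • ·) e₀) → ∀ c0 ∈ C, δ • c0 ∈ C →
      (δ • ·) '' C = C := by
    intro δ hδ c0 hc0 hc0'
    ext y
    constructor
    · rintro ⟨x, hx, rfl⟩; exact hCsub δ hδ c0 hc0 hc0' x hx
    · intro hy
      refine ⟨δ⁻¹ • y, ?_, smul_inv_smul δ y⟩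
      exact hCsub δ⁻¹ (QMAux.st_inv hact hδ) (δ•c0) hc0' (by rw [inv_smul_smul]; exact hc0) y hy
  obtain ⟨T, hT⟩ := horb
  choose κ θ hθT hκ using hT
  have hκinv : ∀ w : V, (κ w)⁻¹ • w = θ w := fun w => inv_smul_eq_iff.mpr (hκ w).symm
  -- a vertex of C in every sector
  have hrepex : ∀ S : (QM.delGraph X e₀).ConnectedComponent,
      ∃ v, (QM.delGraph X e₀).connectedComponentMk v = S := fun S => S.exists_rep
  choose rp hrp using hrepex
  have hcSC : ∀ S : (QM.delGraph X e₀).ConnectedComponent, γ (rp S) ∈ C :=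
    fun S => QMAux.gate_mem hγ _
  have hcSmk : ∀ S : (QM.delGraph X e₀).ConnectedComponent,
      (QM.delGraph X e₀).connectedComponentMk (γ (rp S)) = S := by
    intro S
    rw [← hmkγ (rp S)]
    exact hrp S
  constructor
  · -- Part 1: finitely many orbits of sectors
    let ρ : V → (QM.delGraph X e₀).ConnectedComponent := fun t =>
      if h : ∃ S, θ (γ (rp S)) = t then
        (QM.delGraph X e₀).connectedComponentMk (γ (rp h.choose))
      else (QM.delGraph X e₀).connectedComponentMk a₀
    refine ⟨ρ '' ↑T, T.finite_toSet.image ρ, ?_⟩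
    intro S
    have hex1 : ∃ S', θ (γ (rp S')) = θ (γ (rp S)) := ⟨S, rfl⟩
    have hθeq : θ (γ (rp hex1.choose)) = θ (γ (rp S)) := hex1.choose_spec
    have hρval : ρ (θ (γ (rp S))) =
        (QM.delGraph X e₀).connectedComponentMk (γ (rp hex1.choose)) := dif_pos hex1
    have hgact : (κ (γ (rp S)) * (κ (γ (rp hex1.choose)))⁻¹) • γ (rp hex1.choose) = γ (rp S) := by
      rw [mul_smul, hκinv, hθeq, hκ]
    have hst : QM.SameHyp X e₀
        (Sym2.map ((κ (γ (rp S)) * (κ (γ (rp hex1.choose)))⁻¹) • ·) e₀) :=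
      hstab_of _ _ _ (hpartner _ (hcSC hex1.choose)) (hpartner _ (hcSC S)) hgact
    refine ⟨ρ (θ (γ (rp S))), ⟨θ (γ (rp S)), hθT (γ (rp S)), rfl⟩,
      κ (γ (rp S)) * (κ (γ (rp hex1.choose)))⁻¹, hst, ?_⟩
    intro v hv
    rw [hρval] at hv
    have h4 := QMAux.mk_smul_eq hact hst hv
    rw [h4, hgact]
    exact hcSmk S
  · -- Part 2: finite index of the image of stab(C)
    have himgstab : ∀ h : G, (h • ·) '' C = C → QM.SameHyp X e₀ (Sym2.map (h • ·) e₀) := by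
      intro h himg
      have ha' : h • a₀ ∈ C := by rw [← himg]; exact ⟨a₀, ha₀, rfl⟩
      have hb' : h • b₀ ∈ C := by rw [← himg]; exact ⟨b₀, hb₀, rfl⟩
      have hne' : h • a₀ ≠ h • b₀ := fun hh => hab₀ (smul_left_cancel h hh)
      have h1 := QMAux.sameHyp_smul hact h
        (Relation.EqvGen.symm _ _ (hCdual a₀ ha₀ b₀ hb₀ hab₀))
      rw [Sym2.map_pair_eq] at h1
      have h2 := hCdual _ ha' _ hb' hne'
      exact Relation.EqvGen.symm _ _ (Relation.EqvGen.trans _ _ _ h1 h2)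
    have horbC : ∀ c ∈ C, ∀ c' ∈ C, θ c = θ c' → ∃ h : G, ((h • ·) '' C = C) ∧ h • c = c' := by
      intro c hc c' hc' hθeq
      have hδc : (κ c' * (κ c)⁻¹) • c = c' := by rw [mul_smul, hκinv, hθeq, hκ]
      have hδst : QM.SameHyp X e₀ (Sym2.map ((κ c' * (κ c)⁻¹) • ·) e₀) :=
        hstab_of _ c c' (hpartner c hc) (hpartner c' hc') hδc
      exact ⟨κ c' * (κ c)⁻¹, hCimg _ hδst c hc (hδc.symm ▸ hc'), hδc⟩
    let P : V → Prop := fun t => ∃ f : G, QM.SameHyp X e₀ (Sym2.map (f • ·) e₀) ∧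
      ∃ c ∈ C, θ c = t ∧ (QM.delGraph X e₀).connectedComponentMk c =
        (QM.delGraph X e₀).connectedComponentMk (f • a₀)
    let ρ₂ : V → G := fun t => if h : P t then h.choose else 1
    have hρ₂st : ∀ t, QM.SameHyp X e₀ (Sym2.map ((ρ₂ t) • ·) e₀) := by
      intro t
      by_cases h : P t
      · have hval : ρ₂ t = h.choose := dif_pos h
        rw [hval]
        exact h.choose_spec.1
      · have hval : ρ₂ t = 1 := dif_neg h
        rw [hval]
        exact QMAux.st_one _
    refine ⟨ρ₂ '' ↑T, T.finite_toSet.image _, ?_, ?_⟩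
    · rintro f ⟨t, ht, rfl⟩; exact hρ₂st t
    · intro g hg
      have hc₁C : γ (g • a₀) ∈ C := QMAux.gate_mem hγ _
      have hc₁mk : (QM.delGraph X e₀).connectedComponentMk (γ (g • a₀)) =
          (QM.delGraph X e₀).connectedComponentMk (g • a₀) := (hmkγ (g • a₀)).symm
      have hPt : P (θ (γ (g • a₀))) := ⟨g, hg, γ (g • a₀), hc₁C, rfl, hc₁mk⟩
      have hval : ρ₂ (θ (γ (g • a₀))) = hPt.choose := dif_pos hPt
      obtain ⟨hfst, c₂, hc₂C, hθ₂, hmk₂⟩ := hPt.choose_spec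
      rw [← hval] at hfst hmk₂
      obtain ⟨h, himg, hhc⟩ := horbC c₂ hc₂C (γ (g • a₀)) hc₁C hθ₂
      have hhst : QM.SameHyp X e₀ (Sym2.map (h • ·) e₀) := himgstab h himg
      have hqst : QM.SameHyp X e₀ (Sym2.map ((h * ρ₂ (θ (γ (g • a₀)))) • ·) e₀) :=
        QMAux.st_mul hact hhst hfst
      have hmk3 : (QM.delGraph X e₀).connectedComponentMk ((h * ρ₂ (θ (γ (g • a₀)))) • a₀) =
          (QM.delGraph X e₀).connectedComponentMk (g • a₀) := by
        have h1 := QMAux.mk_smul_eq hact hhst hmk₂.symm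
        rw [mul_smul, h1, hhc]
        exact hc₁mk
      have hkst : QM.SameHyp X e₀
          (Sym2.map (((h * ρ₂ (θ (γ (g • a₀))))⁻¹ * g) • ·) e₀) :=
        QMAux.st_mul hact (QMAux.st_inv hact hqst) hg
      have hkfix : ∃ v : V, (QM.delGraph X e₀).connectedComponentMk
          (((h * ρ₂ (θ (γ (g • a₀))))⁻¹ * g) • v) =
          (QM.delGraph X e₀).connectedComponentMk v := by
        refine ⟨a₀, ?_⟩
        have h2 := QMAux.mk_smul_eq hact (QMAux.st_inv hact hqst) hmk3.symm
        rw [inv_smul_smul] at h2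
        rw [mul_smul]
        exact h2
      have hall := hfreeS e₀ he₀ ((h * ρ₂ (θ (γ (g • a₀))))⁻¹ * g) hkst hkfix
      refine ⟨h, ρ₂ (θ (γ (g • a₀))), himg, ⟨θ (γ (g • a₀)), hθT (γ (g • a₀)), rfl⟩, ?_⟩
      intro v
      have h4 := QMAux.mk_smul_eq hact hqst (hall v)
      have h5 : (h * ρ₂ (θ (γ (g • a₀)))) • (((h * ρ₂ (θ (γ (g • a₀))))⁻¹ * g) • v) = g • v := by
        rw [← mul_smul, mul_inv_cancel_left]
      rw [h5] at h4
      exact h4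
end

section
/- Let G be a group acting on a quasi-median graph X, x₀ a vertex, and 𝒥 a G-invariant, x₀-peripheral collection of hyperplanes (no J₁ ∈ 𝒥 separates x₀ from some J₂ ∈ 𝒥). Assume the action is 𝒥-rotative: for each J ∈ 𝒥 the rotative stabilizer stab_⟲(J) := ⋂{stab(C) : C ⊆ J clique} acts transitively and freely on the set of sectors 𝒮(J). Let Y := ⋂_{J ∈ 𝒥} (sector delimited by J containing x₀) and R := ⟨stab_⟲(J) : J ∈ 𝒥⟩. Then every vertex x of X satisfies r·x ∈ Y for some r ∈ R; i.e., R·Y covers the vertex set of X. -/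
open QM

/-- The rotative stabiliser of the hyperplane dual to `e`: the elements of `G` stabilising
(setwise) every clique dual to this hyperplane. -/
def RotStab {V : Type*} (G : Type*) [Group G] [MulAction G V]
    (X : SimpleGraph V) (e : Sym2 V) : Set G :=
  {g : G | ∀ C : Set V, X.IsClique C → (∀ D : Set V, X.IsClique D → C ⊆ D → D = C) →
    (∃ a ∈ C, ∃ b ∈ C, a ≠ b ∧ SameHyp X s(a, b) e) → (g • ·) '' C = C}

section Aux

open SimpleGraph

variable {V : Type*} {G : Type*} [Group G] [MulAction G V] {X : SimpleGraph V}

private lemma sameHyp_iff_of_sameHyp {e f : Sym2 V} (h : SameHyp X e f) (d : Sym2 V) :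
    SameHyp X d e ↔ SameHyp X d f :=
  ⟨fun hd => Relation.EqvGen.trans _ _ _ hd h,
   fun hd => Relation.EqvGen.trans _ _ _ hd (Relation.EqvGen.symm _ _ h)⟩

private lemma delGraph_eq_of_sameHyp {e f : Sym2 V} (h : SameHyp X e f) :
    delGraph X e = delGraph X f := by
  unfold delGraph
  ext a b
  simp only [SimpleGraph.fromRel_adj]
  rw [sameHyp_iff_of_sameHyp h s(a, b), sameHyp_iff_of_sameHyp h s(b, a)]

private lemma edgeRel_map (hact : ∀ (g : G) (a b : V), X.Adj a b ↔ X.Adj (g • a) (g • b))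
    (g : G) {e f : Sym2 V} (h : EdgeRel X e f) :
    EdgeRel X (Sym2.map (g • ·) e) (Sym2.map (g • ·) f) := by
  rcases h with ⟨a, b, c, hab, hbc, hac, he, hf⟩ | ⟨a, b, c, d, h1, h2, h3, h4, hac, hbd, hor⟩
  · left
    refine ⟨g • a, g • b, g • c, (hact g a b).mp hab, (hact g b c).mp hbc,
      (hact g a c).mp hac, ?_, ?_⟩
    · rcases he with rfl | rfl | rfl <;> simp [Sym2.map_pair_eq, Set.mem_insert_iff]
    · rcases hf with rfl | rfl | rfl <;> simp [Sym2.map_pair_eq, Set.mem_insert_iff]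
  · right
    refine ⟨g • a, g • b, g • c, g • d, (hact g a b).mp h1, (hact g b c).mp h2,
      (hact g c d).mp h3, (hact g d a).mp h4,
      fun hh => hac (smul_left_cancel g hh), fun hh => hbd (smul_left_cancel g hh), ?_⟩
    rcases hor with ⟨rfl, rfl⟩ | ⟨rfl, rfl⟩
    · exact Or.inl ⟨Sym2.map_pair_eq _ _ _, Sym2.map_pair_eq _ _ _⟩
    · exact Or.inr ⟨Sym2.map_pair_eq _ _ _, Sym2.map_pair_eq _ _ _⟩

private lemma sameHyp_map (hact : ∀ (g : G) (a b : V), X.Adj a b ↔ X.Adj (g • a) (g • b))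
    (g : G) {e f : Sym2 V} (h : SameHyp X e f) :
    SameHyp X (Sym2.map (g • ·) e) (Sym2.map (g • ·) f) := by
  induction h with
  | rel x y hxy => exact Relation.EqvGen.rel _ _ (edgeRel_map hact g hxy)
  | refl x => exact Relation.EqvGen.refl _
  | symm x y _ ih => exact Relation.EqvGen.symm _ _ ih
  | trans x y z _ _ ih₁ ih₂ => exact Relation.EqvGen.trans _ _ _ ih₁ ih₂

private lemma sym2_map_inv_map (g : G) (e : Sym2 V) :
    Sym2.map (g • ·) (Sym2.map (g⁻¹ • ·) e) = e := by
  rw [Sym2.map_map]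
  have : ((g • ·) ∘ (g⁻¹ • ·) : V → V) = id := by
    funext v; simp [smul_inv_smul]
  rw [this, Sym2.map_id, id]

private lemma sym2_map_map_inv (g : G) (e : Sym2 V) :
    Sym2.map (g⁻¹ • ·) (Sym2.map (g • ·) e) = e := by
  rw [Sym2.map_map]
  have : ((g⁻¹ • ·) ∘ (g • ·) : V → V) = id := by
    funext v; simp [inv_smul_smul]
  rw [this, Sym2.map_id, id]

private lemma sameHyp_map_iff (hact : ∀ (g : G) (a b : V), X.Adj a b ↔ X.Adj (g • a) (g • b))
    (g : G) {e f : Sym2 V} :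
    SameHyp X (Sym2.map (g • ·) e) (Sym2.map (g • ·) f) ↔ SameHyp X e f := by
  refine ⟨fun h => ?_, sameHyp_map hact g⟩
  have := sameHyp_map hact g⁻¹ h
  rwa [sym2_map_map_inv, sym2_map_map_inv] at this

/-- The `g`-action maps `delGraph X e` to `delGraph X (g • e)` as a graph hom. -/
private lemma delGraph_adj_smul (hact : ∀ (g : G) (a b : V), X.Adj a b ↔ X.Adj (g • a) (g • b))
    (g : G) {e : Sym2 V} {a b : V} (h : (delGraph X e).Adj a b) :
    (delGraph X (Sym2.map (g • ·) e)).Adj (g • a) (g • b) := by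
  unfold delGraph at h ⊢
  rw [SimpleGraph.fromRel_adj] at h ⊢
  obtain ⟨hne, hor⟩ := h
  refine ⟨fun hh => hne (smul_left_cancel g hh), ?_⟩
  have key : ∀ u w : V, X.Adj u w → ¬ SameHyp X s(u, w) e →
      X.Adj (g • u) (g • w) ∧ ¬ SameHyp X s(g • u, g • w) (Sym2.map (g • ·) e) := by
    intro u w hadj hns
    refine ⟨(hact g u w).mp hadj, fun hs => hns ?_⟩
    rw [← Sym2.map_pair_eq (g • ·) u w] at hs
    exact (sameHyp_map_iff hact g).mp hs
  rcases hor with ⟨h1, h2⟩ | ⟨h1, h2⟩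
  · exact Or.inl (key a b h1 h2)
  · exact Or.inr (key b a h1 h2)

private lemma comp_smul (hact : ∀ (g : G) (a b : V), X.Adj a b ↔ X.Adj (g • a) (g • b))
    (g : G) {e : Sym2 V} {u w : V}
    (h : (delGraph X e).connectedComponentMk u = (delGraph X e).connectedComponentMk w) :
    (delGraph X (Sym2.map (g • ·) e)).connectedComponentMk (g • u) =
      (delGraph X (Sym2.map (g • ·) e)).connectedComponentMk (g • w) := by
  rw [SimpleGraph.ConnectedComponent.eq] at h ⊢
  exact h.map ⟨(g • ·), fun hh => delGraph_adj_smul hact g hh⟩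

/-- Any two edges of a clique are dual to the same hyperplane. -/
private lemma clique_edge_sameHyp {C : Set V} (hC : X.IsClique C) {a b u w : V}
    (ha : a ∈ C) (hb : b ∈ C) (hu : u ∈ C) (hw : w ∈ C) (hab : a ≠ b) (huw : u ≠ w) :
    SameHyp X s(u, w) s(a, b) := by
  classical
  have tri : ∀ p q r : V, p ∈ C → q ∈ C → r ∈ C → p ≠ q → q ≠ r → p ≠ r →
      SameHyp X s(p, q) s(p, r) := by
    intro p q r hp hq hr hpq hqr hpr
    refine Relation.EqvGen.rel _ _ (Or.inl ⟨p, q, r, hC hp hq hpq, hC hq hr hqr, hC hp hr hpr,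
      ?_, ?_⟩)
    · left; rfl
    · right; right; rfl
  by_cases h1 : u = a
  · subst h1
    by_cases h2 : w = b
    · subst h2; exact Relation.EqvGen.refl _
    · exact tri u w b hu hw hb huw h2 hab
  · by_cases h1b : u = b
    · subst h1b
      by_cases h2 : w = a
      · subst h2
        rw [Sym2.eq_swap]; exact Relation.EqvGen.refl _
      · have := tri u w a hu hw ha huw h2 (Ne.symm hab)
        rwa [Sym2.eq_swap (a := u) (b := a)] at this
    · by_cases h2 : w = a
      · subst h2
        have := tri w u b hw hu hb (fun hh => h1 hh.symm) h1b hab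
        rwa [Sym2.eq_swap (a := u) (b := w)]
      · by_cases h2b : w = b
        · subst h2b
          have := tri w u a hw hu ha (fun hh => h1b hh.symm) h1 (Ne.symm hab)
          rw [Sym2.eq_swap (a := u) (b := w), Sym2.eq_swap (a := a) (b := w)]
          exact this
        · have s1 : SameHyp X s(u, w) s(u, a) := tri u w a hu hw ha huw h2 h1
          have s2 : SameHyp X s(a, u) s(a, b) := tri a u b ha hu hb (fun hh => h1 hh.symm) h1b hab
          rw [Sym2.eq_swap (a := u) (b := a)] at s1
          exact Relation.EqvGen.trans _ _ _ s1 s2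

/-- Every edge is contained in a maximal clique. -/
private lemma exists_max_clique {a b : V} (hab : X.Adj a b) :
    ∃ C : Set V, X.IsClique C ∧ a ∈ C ∧ b ∈ C ∧
      ∀ D : Set V, X.IsClique D → C ⊆ D → D = C := by
  classical
  set S : Set (Set V) := {C | X.IsClique C ∧ a ∈ C ∧ b ∈ C} with hS
  have hx : ({a, b} : Set V) ∈ S := by
    refine ⟨?_, by simp, by simp⟩
    rw [SimpleGraph.isClique_iff]
    intro u hu w hw hne
    rcases hu with rfl | rfl <;> rcases hw with rfl | rfl
    · exact absurd rfl hne
    · exact hab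
    · exact hab.symm
    · exact absurd rfl hne
  have hchain : ∀ c ⊆ S, IsChain (· ⊆ ·) c → c.Nonempty → ∃ ub ∈ S, ∀ s ∈ c, s ⊆ ub := by
    intro c hcS hchain ⟨c₀, hc₀⟩
    refine ⟨⋃₀ c, ⟨?_, ?_, ?_⟩, fun s hs => Set.subset_sUnion_of_mem hs⟩
    · intro u hu w hw hne
      obtain ⟨s, hs, hus⟩ := hu
      obtain ⟨t, ht, hwt⟩ := hw
      rcases hchain.total hs ht with hst | hts
      · exact (hcS ht).1 (hst hus) hwt hne
      · exact (hcS hs).1 hus (hts hwt) hne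
    · exact ⟨c₀, hc₀, (hcS hc₀).2.1⟩
    · exact ⟨c₀, hc₀, (hcS hc₀).2.2⟩
  obtain ⟨m, hsub, hmax⟩ := zorn_subset_nonempty S hchain _ hx
  refine ⟨m, hmax.prop.1, hmax.prop.2.1, hmax.prop.2.2, fun D hD hmD => ?_⟩
  have : D ∈ S := ⟨hD, hmD hmax.prop.2.1, hmD hmax.prop.2.2⟩
  exact hmax.eq_of_ge this hmD

end Aux
/-- Let `G` act on a quasi-median graph `X`, let `x₀` be a vertex, and let `𝒥` be a
`G`-invariant, `x₀`-peripheral collection of hyperplanes such that the action is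
`𝒥`-rotative. Let `Y` be the intersection of the sectors containing `x₀` delimited by the
hyperplanes of `𝒥`, and let `R` be the subgroup generated by the rotative stabilisers of the
hyperplanes of `𝒥`. Then every vertex of `X` is sent into `Y` by some element of `R`. -/
theorem rotative_translates_cover
    {V G : Type*} [Group G] [MulAction G V]
    (X : SimpleGraph V) (hqm : QuasiMedian X)
    (hact : ∀ (g : G) (a b : V), X.Adj a b ↔ X.Adj (g • a) (g • b))
    (hfaithful : ∀ g : G, (∀ v : V, g • v = v) → g = 1)
    (x₀ : V) (𝒥 : Set (Sym2 V))
    (h𝒥edge : 𝒥 ⊆ X.edgeSet)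
    -- `𝒥` is closed under the hyperplane relation:
    (hclass : ∀ e ∈ 𝒥, ∀ f ∈ X.edgeSet, SameHyp X e f → f ∈ 𝒥)
    -- `𝒥` is `G`-invariant:
    (hGinv : ∀ g : G, ∀ e ∈ 𝒥, Sym2.map (g • ·) e ∈ 𝒥)
    -- `𝒥` is `x₀`-peripheral: no hyperplane of `𝒥` separates `x₀` from another one:
    (hperiph : ¬ ∃ e₁ ∈ 𝒥, ∃ e₂ ∈ 𝒥, ¬ SameHyp X e₁ e₂ ∧
      ∀ v : V, InCarrier X e₂ v →
        (delGraph X e₁).connectedComponentMk v ≠ (delGraph X e₁).connectedComponentMk x₀)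
    -- the action is `𝒥`-rotative: rotative stabilisers act transitively and freely on
    -- the sectors:
    (hrotTrans : ∀ e ∈ 𝒥, ∀ S₁ S₂ : (delGraph X e).ConnectedComponent,
      ∃ g ∈ RotStab G X e, ∀ v : V,
        (delGraph X e).connectedComponentMk v = S₁ →
        (delGraph X e).connectedComponentMk (g • v) = S₂)
    (hrotFree : ∀ e ∈ 𝒥, ∀ g ∈ RotStab G X e,
      (∃ v : V, (delGraph X e).connectedComponentMk (g • v) =
        (delGraph X e).connectedComponentMk v) → g = 1) :
    ∀ x : V, ∃ r ∈ Subgroup.closure {g : G | ∃ e ∈ 𝒥, g ∈ RotStab G X e},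
      ∀ e ∈ 𝒥, (delGraph X e).connectedComponentMk (r • x) =
        (delGraph X e).connectedComponentMk x₀ := by
  classical
  set S : Set G := {g : G | ∃ e ∈ 𝒥, g ∈ RotStab G X e} with hSdef
  -- a walk whose edges avoid 𝒥 does not change any sector of a hyperplane of 𝒥
  have clean : ∀ {u v : V} (p : X.Walk u v), (∀ ep ∈ p.edges, ep ∉ 𝒥) →
      ∀ f ∈ 𝒥, (delGraph X f).connectedComponentMk u =
        (delGraph X f).connectedComponentMk v := by
    intro u v p
    induction p with
    | nil => intro _ f hf; rfl
    | @cons u w v h p ih =>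
      intro hcl f hf
      have hmem : s(u, w) ∉ 𝒥 := hcl _ (by simp [SimpleGraph.Walk.edges_cons])
      have hnsame : ¬ SameHyp X s(u, w) f := by
        intro hs
        exact hmem (hclass f hf s(u, w) (X.mem_edgeSet.mpr h) (Relation.EqvGen.symm _ _ hs))
      have hadj : (delGraph X f).Adj u w := by
        rw [delGraph, SimpleGraph.fromRel_adj]
        exact ⟨h.ne, Or.inl ⟨h, hnsame⟩⟩
      have h1 : (delGraph X f).connectedComponentMk u =
          (delGraph X f).connectedComponentMk w :=
        SimpleGraph.ConnectedComponent.eq.mpr hadj.reachable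
      exact h1.trans (ih (fun ep hep => hcl ep (by simp [SimpleGraph.Walk.edges_cons, hep]))
        f hf)
  -- split a walk at its last 𝒥-edge
  have split : ∀ {u v : V} (p : X.Walk u v),
      (∀ ep ∈ p.edges, ep ∉ 𝒥) ∨
      ∃ a b, ∃ q : X.Walk u a, ∃ q₂ : X.Walk b v, ∃ hab : X.Adj a b,
        s(a, b) ∈ 𝒥 ∧ (∀ ep ∈ q₂.edges, ep ∉ 𝒥) ∧ q.length + 1 + q₂.length = p.length := by
    intro u v p
    induction p with
    | nil => left; simp
    | @cons u w v h p ih =>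
      rcases ih with hcl | ⟨a, b, q, q₂, hab, hmem, hcl, hlen⟩
      · by_cases hJ : s(u, w) ∈ 𝒥
        · right
          exact ⟨u, w, SimpleGraph.Walk.nil, p, h, hJ, hcl, by
            simp only [SimpleGraph.Walk.length_nil, SimpleGraph.Walk.length_cons]
            omega⟩
        · left
          intro ep hep
          rw [SimpleGraph.Walk.edges_cons] at hep
          rcases List.mem_cons.mp hep with rfl | hep'
          · exact hJ
          · exact hcl _ hep'
      · right
        refine ⟨a, b, SimpleGraph.Walk.cons h q, q₂, hab, hmem, hcl, ?_⟩
        simp only [SimpleGraph.Walk.length_cons]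
        omega
  -- the main induction
  have key : ∀ n : ℕ, ∀ x v : V, (∃ p : X.Walk x₀ v, p.length ≤ n) →
      (∀ f ∈ 𝒥, (delGraph X f).connectedComponentMk v =
        (delGraph X f).connectedComponentMk x) →
      ∃ r ∈ Subgroup.closure S, ∀ f ∈ 𝒥,
        (delGraph X f).connectedComponentMk (r • x) =
          (delGraph X f).connectedComponentMk x₀ := by
    intro n
    induction n using Nat.strong_induction_on with
    | _ n ih =>
      intro x v ⟨p, hp⟩ hmatch
      rcases split p with hcl | ⟨a, b, q, q₂, hab, hbJ, hcl, hlen⟩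
      · refine ⟨1, Subgroup.one_mem _, fun f hf => ?_⟩
        rw [one_smul]
        exact ((clean p hcl f hf).trans (hmatch f hf)).symm
      · set e : Sym2 V := s(a, b) with he
        -- b has the same sector profile as x
        have hbx : ∀ f ∈ 𝒥, (delGraph X f).connectedComponentMk b =
            (delGraph X f).connectedComponentMk x := by
          intro f hf
          exact (clean q₂ hcl f hf).trans (hmatch f hf)
        -- a maximal clique containing the edge (a, b)
        obtain ⟨C, hC, haC, hbC, hmaxC⟩ := exists_max_clique hab
        -- the rotative element sending the sector of b to the sector of a
        obtain ⟨g, hgRS, hgmap⟩ := hrotTrans e hbJ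
          ((delGraph X e).connectedComponentMk b) ((delGraph X e).connectedComponentMk a)
        have hCfix : (g • ·) '' C = C :=
          hgRS C hC hmaxC ⟨a, haC, b, hbC, hab.ne, Relation.EqvGen.refl _⟩
        have hgbC : g • b ∈ C := by
          rw [← hCfix]; exact ⟨b, hbC, rfl⟩
        have hgb : (delGraph X e).connectedComponentMk (g • b) =
            (delGraph X e).connectedComponentMk a := hgmap b rfl
        -- the sector profile of g • b agrees with that of a on all hyperplanes of 𝒥
        have hstep : ∀ f ∈ 𝒥, (delGraph X f).connectedComponentMk (g • b) =
            (delGraph X f).connectedComponentMk a := by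
          intro f hf
          by_cases hfe : SameHyp X f e
          · rw [delGraph_eq_of_sameHyp hfe]
            exact hgb
          · by_cases hba : g • b = a
            · rw [hba]
            · have hadj : X.Adj (g • b) a := hC hgbC haC hba
              have hdual : SameHyp X s(g • b, a) e :=
                clique_edge_sameHyp hC haC hbC hgbC haC hab.ne hba
              have hnf : ¬ SameHyp X s(g • b, a) f := by
                intro hs
                exact hfe (Relation.EqvGen.trans _ _ _
                  (Relation.EqvGen.symm _ _ hs) hdual)
              have : (delGraph X f).Adj (g • b) a := by
                rw [delGraph, SimpleGraph.fromRel_adj]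
                exact ⟨hba, Or.inl ⟨hadj, hnf⟩⟩
              exact SimpleGraph.ConnectedComponent.eq.mpr this.reachable
        -- equivariance: g • x and g • b have the same sector profile on 𝒥
        have hgx : ∀ f ∈ 𝒥, (delGraph X f).connectedComponentMk (g • b) =
            (delGraph X f).connectedComponentMk (g • x) := by
          intro f hf
          have hf' : Sym2.map ((g⁻¹ : G) • ·) f ∈ 𝒥 := hGinv g⁻¹ f hf
          have hb' := hbx _ hf'
          have := comp_smul hact g hb'
          rwa [sym2_map_inv_map] at this
        -- the new matching pair (g • x, a)
        have hmatch' : ∀ f ∈ 𝒥, (delGraph X f).connectedComponentMk a =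
            (delGraph X f).connectedComponentMk (g • x) := by
          intro f hf
          exact ((hstep f hf).symm).trans (hgx f hf)
        have hqlen : q.length < n := by omega
        obtain ⟨r', hr'mem, hr'⟩ := ih q.length hqlen (g • x) a ⟨q, le_rfl⟩ hmatch'
        refine ⟨r' * g, Subgroup.mul_mem _ hr'mem
          (Subgroup.subset_closure ⟨e, hbJ, hgRS⟩), fun f hf => ?_⟩
        rw [mul_smul]
        exact hr' f hf
  intro x
  obtain ⟨p⟩ : X.Reachable x₀ x := hqm.1.preconnected x₀ x
  exact key p.length x x ⟨p, le_rfl⟩ (fun f hf => rfl)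
end
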